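/- arXiv:1008.4533 — 7 statements merged into one kernel-verified Lean document; each statement's English description precedes it below -/
import Mathlib

section
/- If B ⊆ F_{n,d} is a blender, then its dual cone B* = {q ∈ F_{n,d} : [p,q] ≥ 0 for all p ∈ B} is also a blender. -/
open MvPolynomial Filter

/-- Composition of a form with a matrix: `(p ∘ M)(x) = p (M x)`. -/
noncomputable def compMat {n : ℕ} (p : MvPolynomial (Fin n) ℝ)
    (M : Matrix (Fin n) (Fin n) ℝ) : MvPolynomial (Fin n) ℝ :=
  aeval (fun j => ∑ k, MvPolynomial.C (M j k) * X k) p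

/-- Coefficientwise convergence of a sequence of polynomials. -/
def CoeffTendsto {n : ℕ} (f : ℕ → MvPolynomial (Fin n) ℝ)
    (q : MvPolynomial (Fin n) ℝ) : Prop :=
  ∀ i : Fin n →₀ ℕ, Tendsto (fun m => (f m).coeff i) atTop (nhds (q.coeff i))

/-- A blender: a closed convex cone of degree-`d` forms closed under linear changes of variables. -/
def IsBlender (n d : ℕ) (B : Set (MvPolynomial (Fin n) ℝ)) : Prop :=
  (∀ p ∈ B, p.IsHomogeneous d) ∧
  (0 ∈ B) ∧
  (∀ p ∈ B, ∀ q ∈ B, p + q ∈ B) ∧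
  (∀ (f : ℕ → MvPolynomial (Fin n) ℝ) (q : MvPolynomial (Fin n) ℝ),
      (∀ m, f m ∈ B) → CoeffTendsto f q → q ∈ B) ∧
  (∀ p ∈ B, ∀ M : Matrix (Fin n) (Fin n) ℝ, compMat p M ∈ B)

/-- The inner product `[p,q] = Σ_i c(i) a(p;i) a(q;i)`, where the coefficient of `x^i`
is `c(i) a(p;i)` and `c(i)` is the multinomial coefficient. -/
noncomputable def formInner {n : ℕ} (p q : MvPolynomial (Fin n) ℝ) : ℝ :=
  ∑ i ∈ p.support ∪ q.support,
    p.coeff i * q.coeff i / (Nat.multinomial Finset.univ (fun j => i j) : ℝ)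

/-- The cone of psd forms of degree `d`. -/
def Psd (n d : ℕ) : Set (MvPolynomial (Fin n) ℝ) :=
  {p | p.IsHomogeneous d ∧ ∀ u : Fin n → ℝ, 0 ≤ eval u p}

/-- The linear form with coefficients `a`. -/
noncomputable def linForm {n : ℕ} (a : Fin n → ℝ) : MvPolynomial (Fin n) ℝ :=
  ∑ j, MvPolynomial.C (a j) * X j

/-- The cone `Q_{n,d}` of sums of `d`-th powers of real linear forms. -/
def SumPow (n d : ℕ) : Set (MvPolynomial (Fin n) ℝ) :=
  {p | ∃ (s : ℕ) (a : Fin s → Fin n → ℝ), p = ∑ k, (linForm (a k)) ^ d}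

/-- The dual cone of `B` inside `F_{n,d}` with respect to the inner product `[·,·]`. -/
def dualCone (n d : ℕ) (B : Set (MvPolynomial (Fin n) ℝ)) : Set (MvPolynomial (Fin n) ℝ) :=
  {q | q.IsHomogeneous d ∧ ∀ p ∈ B, 0 ≤ formInner p q}

/-!
The dual cone is a closed convex cone of forms of degree `d` because `[p, ·]` is linear and
continuous for coefficientwise convergence. Invariance under `q ↦ q ∘ M` comes from the adjunction
`[p, q ∘ M] = [p ∘ Mᵀ, q]`. For `p = ℓ_a^d` (a power of a linear form) both sides equal `q (M a)`
by the reproducing property `[ℓ_a^d, q] = q a`. A linear functional `L` vanishing on all `ℓ_a^d`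
vanishes on all forms of degree `d`: the form `r` representing `L` through `[·, ·]` satisfies
`r a = [ℓ_a^d, r] = L ℓ_a^d = 0` for every `a`, so `r = 0`.
-/

open scoped Matrix

variable {n : ℕ}

theorem formInner_eq_sum_of_support_subset {p q : MvPolynomial (Fin n) ℝ}
    {S : Finset (Fin n →₀ ℕ)} (hp : p.support ⊆ S) :
    formInner p q =
      ∑ i ∈ S, p.coeff i * q.coeff i / (Nat.multinomial Finset.univ (fun j => i j) : ℝ) := by
  have vanish {T : Finset (Fin n →₀ ℕ)} (i) (_ : i ∈ T) (hi : i ∉ p.support) :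
      p.coeff i * q.coeff i / (Nat.multinomial Finset.univ (fun j => i j) : ℝ) = 0 := by
    rw [notMem_support_iff.1 hi, zero_mul, zero_div]
  rw [formInner, ← Finset.sum_subset Finset.subset_union_left vanish,
    Finset.sum_subset hp vanish]

theorem formInner_comm (p q : MvPolynomial (Fin n) ℝ) : formInner p q = formInner q p := by
  simp only [formInner, Finset.union_comm p.support, mul_comm (p.coeff _)]

theorem formInner_add_left (p₁ p₂ q : MvPolynomial (Fin n) ℝ) :
    formInner (p₁ + p₂) q = formInner p₁ q + formInner p₂ q := by
  rw [formInner_eq_sum_of_support_subset support_add,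
    formInner_eq_sum_of_support_subset Finset.subset_union_left,
    formInner_eq_sum_of_support_subset Finset.subset_union_right, ← Finset.sum_add_distrib]
  simp only [coeff_add, add_mul, add_div]

theorem formInner_smul_left (c : ℝ) (p q : MvPolynomial (Fin n) ℝ) :
    formInner (c • p) q = c * formInner p q := by
  rw [formInner_eq_sum_of_support_subset support_smul, formInner_eq_sum_of_support_subset le_rfl,
    Finset.mul_sum]
  simp only [coeff_smul, smul_eq_mul, mul_assoc, mul_div_assoc]

noncomputable def formInnerₗ : MvPolynomial (Fin n) ℝ →ₗ[ℝ] MvPolynomial (Fin n) ℝ →ₗ[ℝ] ℝ :=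
  LinearMap.mk₂ ℝ formInner formInner_add_left formInner_smul_left
    (fun p q₁ q₂ => by simp only [formInner_comm p, formInner_add_left])
    (fun c p q => by simp only [formInner_comm p, formInner_smul_left, smul_eq_mul])

@[simp] theorem formInnerₗ_apply (p q : MvPolynomial (Fin n) ℝ) :
    formInnerₗ p q = formInner p q :=
  rfl

theorem formInner_zero_right (p : MvPolynomial (Fin n) ℝ) : formInner p 0 = 0 :=
  (formInnerₗ p).map_zero

theorem formInner_add_right (p q₁ q₂ : MvPolynomial (Fin n) ℝ) :
    formInner p (q₁ + q₂) = formInner p q₁ + formInner p q₂ :=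
  (formInnerₗ p).map_add q₁ q₂

theorem CoeffTendsto.tendsto_formInner {f : ℕ → MvPolynomial (Fin n) ℝ}
    {q : MvPolynomial (Fin n) ℝ} (hf : CoeffTendsto f q) (p : MvPolynomial (Fin n) ℝ) :
    Tendsto (fun m => formInner p (f m)) atTop (nhds (formInner p q)) := by
  simp only [formInner_eq_sum_of_support_subset (q := f _) (subset_refl p.support),
    formInner_eq_sum_of_support_subset (q := q) (subset_refl p.support)]
  exact tendsto_finsetSum _ fun i _ => ((hf i).const_mul _).div_const _

theorem CoeffTendsto.isHomogeneous {d : ℕ} {f : ℕ → MvPolynomial (Fin n) ℝ}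
    {q : MvPolynomial (Fin n) ℝ} (hf : CoeffTendsto f q) (hhom : ∀ m, (f m).IsHomogeneous d) :
    q.IsHomogeneous d := by
  refine fun i hi => by_contra fun hd => hi ?_
  have hzero : ∀ m, (f m).coeff i = 0 := fun m =>
    IsWeightedHomogeneous.coeff_eq_zero (hhom m) i hd
  exact tendsto_nhds_unique (hf i) (by simp only [hzero, tendsto_const_nhds])

theorem isHomogeneous_linForm (a : Fin n → ℝ) : (linForm a).IsHomogeneous 1 :=
  IsHomogeneous.sum _ _ _ fun j _ => isHomogeneous_C_mul_X (a j) j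

theorem isHomogeneous_linForm_pow (a : Fin n → ℝ) (d : ℕ) : (linForm a ^ d).IsHomogeneous d := by
  simpa using (isHomogeneous_linForm a).pow d

theorem coeff_linForm_pow (a : Fin n → ℝ) {d : ℕ} {i : Fin n →₀ ℕ} (hi : i.degree = d) :
    (linForm a ^ d).coeff i =
      Nat.multinomial Finset.univ (fun j => i j) * ∏ j, a j ^ i j := by
  have hsum : i.sum (fun _ m => m) = d := hi
  simp only [linForm, ← smul_eq_C_mul, coeff_linearCombination_X_pow_of_fintype, if_pos hsum,
    Finsupp.multinomial_of_support_subset (Finset.subset_univ i.support),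
    Finsupp.prod_fintype _ _ fun j => pow_zero (a j)]

theorem formInner_linForm_pow (a : Fin n → ℝ) {d : ℕ} {q : MvPolynomial (Fin n) ℝ}
    (hq : q.IsHomogeneous d) : formInner (linForm a ^ d) q = eval a q := by
  rw [formInner_comm, formInner_eq_sum_of_support_subset le_rfl, eval_eq']
  refine Finset.sum_congr rfl fun i hi => ?_
  rw [coeff_linForm_pow a (hq.degree_eq_sum_deg_support hi).symm, mul_div_assoc,
    mul_div_cancel_left₀ _ (Nat.cast_ne_zero.2 (Nat.multinomial_pos _ _).ne')]

theorem MvPolynomial.IsHomogeneous.compMat {d : ℕ} {q : MvPolynomial (Fin n) ℝ}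
    (hq : q.IsHomogeneous d) (M : Matrix (Fin n) (Fin n) ℝ) : (compMat q M).IsHomogeneous d := by
  have h := hq.aeval _ fun j => isHomogeneous_linForm (M j)
  rwa [one_mul] at h

theorem compMat_linForm (a : Fin n → ℝ) (M : Matrix (Fin n) (Fin n) ℝ) :
    compMat (linForm a) M = linForm (a ᵥ* M) := by
  simp only [compMat, linForm, map_sum, map_mul, aeval_C, aeval_X, algebraMap_eq, Finset.mul_sum,
    Matrix.vecMul, dotProduct, Finset.sum_mul, ← mul_assoc]
  exact Finset.sum_comm

theorem eval_compMat (a : Fin n → ℝ) (q : MvPolynomial (Fin n) ℝ) (M : Matrix (Fin n) (Fin n) ℝ) :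
    eval a (compMat q M) = eval (M *ᵥ a) q := by
  rw [compMat, aeval_eq_bind₁]
  refine (eval₂Hom_bind₁ _ _ _ q).trans ?_
  congr 2
  funext j
  simp [Matrix.mulVec, dotProduct]

noncomputable def compMatₗ (M : Matrix (Fin n) (Fin n) ℝ) :
    MvPolynomial (Fin n) ℝ →ₗ[ℝ] MvPolynomial (Fin n) ℝ :=
  (aeval fun j => ∑ k, C (M j k) * X k).toLinearMap

@[simp] theorem compMatₗ_apply (M : Matrix (Fin n) (Fin n) ℝ) (p : MvPolynomial (Fin n) ℝ) :
    compMatₗ M p = compMat p M :=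
  rfl

theorem compMat_pow (p : MvPolynomial (Fin n) ℝ) (d : ℕ) (M : Matrix (Fin n) (Fin n) ℝ) :
    compMat (p ^ d) M = compMat p M ^ d :=
  map_pow _ p d

noncomputable def formInnerRep (d : ℕ) (L : MvPolynomial (Fin n) ℝ →ₗ[ℝ] ℝ) :
    MvPolynomial (Fin n) ℝ :=
  ∑ i ∈ Finset.finsuppAntidiag Finset.univ d,
    monomial i (Nat.multinomial Finset.univ (fun j => i j) * L (monomial i 1))

theorem isHomogeneous_formInnerRep (d : ℕ) (L : MvPolynomial (Fin n) ℝ →ₗ[ℝ] ℝ) :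
    (formInnerRep d L).IsHomogeneous d :=
  IsHomogeneous.sum _ _ _ fun i hi => isHomogeneous_monomial _ <| by
    rw [Finsupp.degree_eq_sum, (Finset.mem_finsuppAntidiag.1 hi).1]

theorem formInner_formInnerRep {d : ℕ} (L : MvPolynomial (Fin n) ℝ →ₗ[ℝ] ℝ)
    {p : MvPolynomial (Fin n) ℝ} (hp : p.IsHomogeneous d) :
    formInner p (formInnerRep d L) = L p := by
  conv_rhs => rw [← support_sum_monomial_coeff p]
  rw [formInner_eq_sum_of_support_subset le_rfl, map_sum]
  refine Finset.sum_congr rfl fun i hi => ?_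
  have hi_deg : i ∈ Finset.finsuppAntidiag Finset.univ d := by
    rw [Finset.mem_finsuppAntidiag, ← Finsupp.degree_eq_sum]
    exact ⟨(hp.degree_eq_sum_deg_support hi).symm, Finset.subset_univ _⟩
  have hmono : monomial i (p.coeff i) = p.coeff i • monomial i (1 : ℝ) := by
    rw [smul_monomial, smul_eq_mul, mul_one]
  rw [formInnerRep, coeff_sum, Finset.sum_eq_single_of_mem i hi_deg
      fun k _ hk => by rw [coeff_monomial, if_neg hk], coeff_monomial, if_pos rfl,
    hmono, map_smul, smul_eq_mul]
  field_simp [(Nat.multinomial_pos _ _).ne']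

theorem LinearMap.apply_eq_of_forall_linForm_pow {d : ℕ}
    {L₁ L₂ : MvPolynomial (Fin n) ℝ →ₗ[ℝ] ℝ} (h : ∀ a, L₁ (linForm a ^ d) = L₂ (linForm a ^ d))
    {p : MvPolynomial (Fin n) ℝ} (hp : p.IsHomogeneous d) : L₁ p = L₂ p := by
  have hrep : formInnerRep d (L₁ - L₂) = 0 := MvPolynomial.funext fun a => by
    rw [← formInner_linForm_pow a (isHomogeneous_formInnerRep d _),
      formInner_formInnerRep _ (isHomogeneous_linForm_pow a d), LinearMap.sub_apply, h, sub_self,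
      map_zero]
  have hL := formInner_formInnerRep (L₁ - L₂) hp
  rwa [hrep, formInner_zero_right, eq_comm, LinearMap.sub_apply, sub_eq_zero] at hL

theorem formInner_compMat {d : ℕ} {p q : MvPolynomial (Fin n) ℝ} (hp : p.IsHomogeneous d)
    (hq : q.IsHomogeneous d) (M : Matrix (Fin n) (Fin n) ℝ) :
    formInner p (compMat q M) = formInner (compMat p Mᵀ) q := by
  refine LinearMap.apply_eq_of_forall_linForm_pow (L₁ := formInnerₗ.flip (compMat q M))
    (L₂ := formInnerₗ.flip q ∘ₗ compMatₗ Mᵀ) (fun a => ?_) hp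
  simp only [LinearMap.comp_apply, LinearMap.flip_apply, formInnerₗ_apply, compMatₗ_apply,
    compMat_pow, compMat_linForm, Matrix.vecMul_transpose, formInner_linForm_pow _ hq,
    formInner_linForm_pow _ (hq.compMat M), eval_compMat]

/-- The dual cone of a blender is a blender. -/
theorem isBlender_dualCone (n d : ℕ) (B : Set (MvPolynomial (Fin n) ℝ))
    (hB : IsBlender n d B) : IsBlender n d (dualCone n d B) := by
  obtain ⟨hB_hom, -, -, -, hB_comp⟩ := hB
  refine ⟨fun q hq => hq.1, ?zero, ?add, ?closed, ?comp⟩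
  case zero => exact ⟨isHomogeneous_zero _ _ _, fun p _ => (formInner_zero_right p).ge⟩
  case add =>
    intro q hq r hr
    refine ⟨hq.1.add hr.1, fun p hp => ?_⟩
    rw [formInner_add_right]
    exact add_nonneg (hq.2 p hp) (hr.2 p hp)
  case closed =>
    intro f q hf hlim
    refine ⟨hlim.isHomogeneous fun m => (hf m).1, fun p hp => ?_⟩
    exact ge_of_tendsto' (hlim.tendsto_formInner p) fun m => (hf m).2 p hp
  case comp =>
    intro q hq M
    refine ⟨hq.1.compMat M, fun p hp => ?_⟩
    rw [formInner_compMat (hB_hom p hp) hq.1]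
    exact hq.2 _ (hB_comp p hp Mᵀ)
end

section
/- For positive integers u, v with uv = r, the Waring cone W_{n,(u,2v)} = {p ∈ F_{n,2r} : p = Σ_{k=1}^s h_k^{2v} for some s ∈ ℕ and forms h_k ∈ F_{n,u}} is a blender in F_{n,2r}; in particular, it is a closed subset of F_{n,2r}. -/
open MvPolynomial Filter

/-- The Waring cone `W_{n,(u,w)}`: finite sums of `w`-th powers of forms of degree `u`. -/
def WaringCone (n u w : ℕ) : Set (MvPolynomial (Fin n) ℝ) :=
  {p | ∃ (s : ℕ) (h : Fin s → MvPolynomial (Fin n) ℝ),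
    (∀ k, (h k).IsHomogeneous u) ∧ p = ∑ k, (h k) ^ w}

/-! Closure under sums and linear substitutions is immediate. For closedness, Carathéodory's
theorem for the cone of `w`-th powers of forms of degree `u` shows that every element of
`W_{n,(u,w)}` is a sum of `N = dim F_{n,uw} + 1` such powers, so the cone is the image of
`(h₁, …, h_N) ↦ ∑ hₖ ^ w` on `F_{n,u}^N`. As `w` is even this map vanishes only at `0`, and being
homogeneous of degree `w` it grows like `‖h‖ ^ w`; hence it is proper and its image is closed. -/

section PositivelyHomogeneous

variable {E F : Type*} [NormedAddCommGroup E] [NormedSpace ℝ E] [ProperSpace E]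
  [NormedAddCommGroup F] [NormedSpace ℝ F] {Φ : E → F} {w : ℕ}

lemma exists_pos_forall_mul_norm_pow_le_norm (hΦ : Continuous Φ) (hw : w ≠ 0)
    (hsmul : ∀ t : ℝ, 0 ≤ t → ∀ x, Φ (t • x) = t ^ w • Φ x) (hzero : ∀ x, Φ x = 0 → x = 0) :
    ∃ δ > 0, ∀ x, δ * ‖x‖ ^ w ≤ ‖Φ x‖ := by
  rcases subsingleton_or_nontrivial E with _ | _
  · refine ⟨1, one_pos, fun x => ?_⟩
    rw [Subsingleton.elim x 0, norm_zero, zero_pow hw, mul_zero]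
    exact norm_nonneg _
  obtain ⟨x₀, hx₀, hmin⟩ := (isCompact_sphere (0 : E) 1).exists_isMinOn
    (NormedSpace.sphere_nonempty.mpr zero_le_one) hΦ.norm.continuousOn
  rw [mem_sphere_zero_iff_norm] at hx₀
  refine ⟨‖Φ x₀‖, norm_pos_iff.mpr fun h => by simp [hzero x₀ h] at hx₀, fun x => ?_⟩
  rcases eq_or_ne x 0 with rfl | hx
  · simp [zero_pow hw]
  have hunit : ‖x‖⁻¹ • x ∈ Metric.sphere (0 : E) 1 := by
    simp [norm_smul, hx]
  calc ‖Φ x₀‖ * ‖x‖ ^ w ≤ ‖Φ (‖x‖⁻¹ • x)‖ * ‖x‖ ^ w := by gcongr; exact hmin hunit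
    _ = ‖Φ (‖x‖ • ‖x‖⁻¹ • x)‖ := by
        rw [hsmul _ (norm_nonneg x), norm_smul, norm_pow, norm_norm, mul_comm]
    _ = ‖Φ x‖ := by rw [smul_inv_smul₀ (norm_ne_zero_iff.mpr hx)]

lemma isProperMap_of_pos_homogeneous [ProperSpace F] (hΦ : Continuous Φ) (hw : w ≠ 0)
    (hsmul : ∀ t : ℝ, 0 ≤ t → ∀ x, Φ (t • x) = t ^ w • Φ x) (hzero : ∀ x, Φ x = 0 → x = 0) :
    IsProperMap Φ := by
  obtain ⟨δ, hδ, hle⟩ := exists_pos_forall_mul_norm_pow_le_norm hΦ hw hsmul hzero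
  refine isProperMap_iff_tendsto_cocompact.mpr ⟨hΦ, ?_⟩
  rw [← Metric.cobounded_eq_cocompact, ← Metric.cobounded_eq_cocompact,
    ← tendsto_norm_atTop_iff_cobounded]
  exact Filter.tendsto_atTop_mono hle
    (((Filter.tendsto_pow_atTop hw).comp tendsto_norm_cobounded_atTop).const_mul_atTop hδ)

end PositivelyHomogeneous

lemma exists_fin_sum_eq_of_card_le {ι M : Type*} [AddCommMonoid M] {S : Set M} (h0 : 0 ∈ S)
    {t : Finset ι} {y : ι → M} (hy : ∀ i ∈ t, y i ∈ S) {N : ℕ} (ht : t.card ≤ N) :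
    ∃ y' : Fin N → M, (∀ k, y' k ∈ S) ∧ ∑ k, y' k = ∑ i ∈ t, y i := by
  classical
  let e : t ↪ Fin N := t.equivFin.toEmbedding.trans (Fin.castLEEmb ht)
  have hext (i : t) : Function.extend e (y ∘ (↑)) 0 (e i) = y i :=
    e.injective.extend_apply _ _ i
  refine ⟨Function.extend e (y ∘ (↑)) 0, fun k => ?_, ?_⟩
  · by_cases hk : ∃ i, e i = k
    · obtain ⟨i, rfl⟩ := hk
      exact hext i ▸ hy i i.2
    · rwa [Function.extend_apply' _ _ _ hk]
  · rw [← Finset.sum_coe_sort t]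
    exact (Fintype.sum_of_injective e e.injective _ _
      (fun k hk => Function.extend_apply' _ _ k hk) fun i => (hext i).symm).symm

/-- Carathéodory's theorem for cones. -/
lemma exists_fin_finrank_succ_sum_eq {V ι : Type*} [AddCommGroup V] [Module ℝ V]
    [FiniteDimensional ℝ V] {S : Set V} (h0 : 0 ∈ S)
    (hsmul : ∀ t : ℝ, 0 ≤ t → ∀ x ∈ S, t • x ∈ S) {s : Finset ι} {z : ι → V}
    (hz : ∀ i ∈ s, z i ∈ S) :
    ∃ y : Fin (Module.finrank ℝ V + 1) → V, (∀ k, y k ∈ S) ∧ ∑ k, y k = ∑ i ∈ s, z i := by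
  have hhull : ∑ i ∈ s, z i ∈ convexHull ℝ S := by
    rcases s.eq_empty_or_nonempty with rfl | hs
    · simpa using subset_convexHull ℝ S h0
    have hs0 : (s.card : ℝ) ≠ 0 := by exact_mod_cast hs.card_pos.ne'
    convert (convex_convexHull ℝ S).sum_mem (w := fun _ => (s.card : ℝ)⁻¹)
      (z := fun i => (s.card : ℝ) • z i) (fun _ _ => by positivity)
      (by simp [hs0]) (fun i hi => subset_convexHull ℝ S (hsmul _ (by positivity) _ (hz i hi)))
      using 2 with i
    rw [inv_smul_smul₀ hs0]
  rw [convexHull_eq_union] at hhull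
  simp only [Set.mem_iUnion] at hhull
  obtain ⟨t, htS, hindep, hx⟩ := hhull
  obtain ⟨a, ha, -, hsum⟩ := Finset.mem_convexHull'.mp hx
  have hcard : t.card ≤ Module.finrank ℝ V + 1 := by
    have := hindep.card_le_finrank_succ
    rw [Fintype.card_coe] at this
    exact this.trans (Nat.succ_le_succ (Submodule.finrank_le _))
  rw [← hsum]
  exact exists_fin_sum_eq_of_card_le h0 (fun e he => hsmul _ (ha e he) _ (htS he)) hcard

namespace MvPolynomial

section CoeffContinuity

variable {A σ R : Type*} [TopologicalSpace A] [CommSemiring R] [TopologicalSpace R]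
  [IsTopologicalSemiring R] {F G : A → MvPolynomial σ R}

lemma continuous_coeff_mul (hF : ∀ j, Continuous fun a => coeff j (F a))
    (hG : ∀ j, Continuous fun a => coeff j (G a)) (j : σ →₀ ℕ) :
    Continuous fun a => coeff j (F a * G a) := by
  classical
  simp_rw [coeff_mul]
  exact continuous_finsetSum _ fun x _ => (hF x.1).mul (hG x.2)

lemma continuous_coeff_pow (hF : ∀ j, Continuous fun a => coeff j (F a)) (w : ℕ)
    (j : σ →₀ ℕ) : Continuous fun a => coeff j (F a ^ w) := by
  induction w generalizing j with
  | zero =>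
    simp only [pow_zero]
    exact continuous_const
  | succ k ih =>
    simp_rw [pow_succ]
    exact continuous_coeff_mul ih hF j

end CoeffContinuity

lemma eq_zero_of_sum_pow_eq_zero {σ ι : Type*} {w : ℕ} (hw : Even w) (hw0 : w ≠ 0)
    {s : Finset ι} {g : ι → MvPolynomial σ ℝ} (h : ∑ k ∈ s, g k ^ w = 0) :
    ∀ k ∈ s, g k = 0 := by
  intro k hk
  refine funext fun x => ?_
  have hsum : ∑ k ∈ s, eval x (g k) ^ w = 0 := by simpa using congrArg (eval x) h
  have := (Finset.sum_eq_zero_iff_of_nonneg fun k _ => hw.pow_nonneg (eval x (g k))).mp hsum k hk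
  simpa using pow_eq_zero_iff hw0 |>.mp this

instance finiteDimensional_homogeneousSubmodule {σ : Type*} [Finite σ] (d : ℕ) :
    FiniteDimensional ℝ (homogeneousSubmodule σ ℝ d) :=
  Module.Finite.iff_fg.mpr (homogeneousSubmodule_fg σ ℝ d)

end MvPolynomial

lemma MvPolynomial.IsHomogeneous.of_coeffTendsto {n d : ℕ} {f : ℕ → MvPolynomial (Fin n) ℝ}
    {q : MvPolynomial (Fin n) ℝ} (hf : ∀ m, (f m).IsHomogeneous d) (hq : CoeffTendsto f q) :
    q.IsHomogeneous d := by
  intro i hi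
  suffices i.degree = d by rwa [Finsupp.degree_eq_weight_one, ← Pi.one_def] at this
  by_contra hdeg
  have hzero : Tendsto (fun m => (f m).coeff i) atTop (nhds 0) :=
    tendsto_const_nhds.congr fun m => ((hf m).coeff_eq_zero hdeg).symm
  exact hi (tendsto_nhds_unique (hq i) hzero)

section Coordinates

variable {n d : ℕ}

noncomputable def exponentsOfDegree (n d : ℕ) : Finset (Fin n →₀ ℕ) :=
  Finset.finsuppAntidiag Finset.univ d

lemma mem_exponentsOfDegree {i : Fin n →₀ ℕ} : i ∈ exponentsOfDegree n d ↔ i.degree = d := by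
  simp [exponentsOfDegree, Finset.mem_finsuppAntidiag, Finsupp.degree_eq_sum]

def coeffVec (d : ℕ) (p : MvPolynomial (Fin n) ℝ) : exponentsOfDegree n d → ℝ :=
  fun i => p.coeff i

noncomputable def ofCoeffVec (c : exponentsOfDegree n d → ℝ) : MvPolynomial (Fin n) ℝ :=
  ∑ i : exponentsOfDegree n d, monomial i.1 (c i)

lemma coeff_ofCoeffVec (c : exponentsOfDegree n d → ℝ) (j : Fin n →₀ ℕ) :
    (ofCoeffVec c).coeff j = if h : j ∈ exponentsOfDegree n d then c ⟨j, h⟩ else 0 := by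
  classical
  simp only [ofCoeffVec, coeff_sum, coeff_monomial]
  split_ifs with h
  · rw [Finset.sum_eq_single ⟨j, h⟩ (fun i _ hi => if_neg fun hij => hi (Subtype.ext hij))
      (by simp), if_pos rfl]
  · exact Finset.sum_eq_zero fun i _ => if_neg fun (hij : i.1 = j) => h (hij ▸ i.2)

lemma isHomogeneous_ofCoeffVec (c : exponentsOfDegree n d → ℝ) :
    (ofCoeffVec c).IsHomogeneous d :=
  IsHomogeneous.sum _ _ _ fun i _ => isHomogeneous_monomial _ (mem_exponentsOfDegree.mp i.2)

@[simp]
lemma coeffVec_ofCoeffVec (c : exponentsOfDegree n d → ℝ) : coeffVec d (ofCoeffVec c) = c := by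
  funext i
  simp [coeffVec, coeff_ofCoeffVec]

lemma ofCoeffVec_coeffVec {p : MvPolynomial (Fin n) ℝ} (hp : p.IsHomogeneous d) :
    ofCoeffVec (coeffVec d p) = p := by
  ext j
  rw [coeff_ofCoeffVec]
  split_ifs with h
  · rfl
  · exact (hp.coeff_eq_zero fun hj => h (mem_exponentsOfDegree.mpr hj)).symm

lemma ofCoeffVec_smul (t : ℝ) (c : exponentsOfDegree n d → ℝ) :
    ofCoeffVec (t • c) = C t * ofCoeffVec c := by
  simp only [ofCoeffVec, Finset.mul_sum, Pi.smul_apply, smul_eq_mul, C_mul_monomial]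

lemma continuous_coeff_ofCoeffVec (j : Fin n →₀ ℕ) :
    Continuous fun c : exponentsOfDegree n d → ℝ => (ofCoeffVec c).coeff j := by
  simp_rw [coeff_ofCoeffVec]
  split_ifs
  · exact continuous_apply _
  · exact continuous_const

end Coordinates

section PowerSum

variable {n u N : ℕ}

/-- `∑ₖ hₖ ^ w`, where `c k` is the coefficient vector of the form `hₖ` of degree `u`. -/
noncomputable def powerSum (w : ℕ) (c : Fin N → exponentsOfDegree n u → ℝ) :
    MvPolynomial (Fin n) ℝ :=
  ∑ k, ofCoeffVec (c k) ^ w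

lemma powerSum_mem_waringCone (w : ℕ) (c : Fin N → exponentsOfDegree n u → ℝ) :
    powerSum w c ∈ WaringCone n u w :=
  ⟨N, fun k => ofCoeffVec (c k), fun _ => isHomogeneous_ofCoeffVec _, rfl⟩

lemma isHomogeneous_powerSum (w : ℕ) (c : Fin N → exponentsOfDegree n u → ℝ) :
    (powerSum w c).IsHomogeneous (u * w) :=
  IsHomogeneous.sum _ _ _ fun _ _ => (isHomogeneous_ofCoeffVec _).pow w

lemma powerSum_smul (w : ℕ) (t : ℝ) (c : Fin N → exponentsOfDegree n u → ℝ) :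
    powerSum w (t • c) = C (t ^ w) * powerSum w c := by
  simp only [powerSum, Finset.mul_sum, Pi.smul_apply, ofCoeffVec_smul, mul_pow, map_pow]

lemma continuous_coeffVec_powerSum (w d : ℕ) :
    Continuous fun c : Fin N → exponentsOfDegree n u → ℝ => coeffVec d (powerSum w c) := by
  refine continuous_pi fun i => ?_
  simp only [coeffVec, powerSum, coeff_sum]
  exact continuous_finsetSum _ fun k _ => continuous_coeff_pow
    (fun j => (continuous_coeff_ofCoeffVec j).comp (continuous_apply k)) w _

lemma eq_zero_of_powerSum_eq_zero {w : ℕ} (hw : Even w) (hw0 : w ≠ 0)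
    {c : Fin N → exponentsOfDegree n u → ℝ} (h : powerSum w c = 0) : c = 0 := by
  funext k
  rw [← coeffVec_ofCoeffVec (c k), eq_zero_of_sum_pow_eq_zero hw hw0 h k (Finset.mem_univ k)]
  rfl

lemma exists_powerSum_eq {w : ℕ} (hw : w ≠ 0) {p : MvPolynomial (Fin n) ℝ}
    (hp : p ∈ WaringCone n u w) :
    ∃ c : Fin (Module.finrank ℝ (homogeneousSubmodule (Fin n) ℝ (u * w)) + 1) →
      exponentsOfDegree n u → ℝ, powerSum w c = p := by
  obtain ⟨s, h, hh, rfl⟩ := hp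
  let S : Set (homogeneousSubmodule (Fin n) ℝ (u * w)) :=
    {x | ∃ g : MvPolynomial (Fin n) ℝ, g.IsHomogeneous u ∧ (x : MvPolynomial (Fin n) ℝ) = g ^ w}
  have h0 : 0 ∈ S := ⟨0, isHomogeneous_zero _ _ _, (zero_pow hw).symm⟩
  have hsmul : ∀ t : ℝ, 0 ≤ t → ∀ x ∈ S, t • x ∈ S := by
    rintro t ht x ⟨g, hg, hx⟩
    refine ⟨C (t ^ (w : ℝ)⁻¹) * g, hg.C_mul _, ?_⟩
    rw [Submodule.coe_smul, hx, mul_pow, ← map_pow, Real.rpow_inv_natCast_pow ht hw,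
      smul_eq_C_mul]
  obtain ⟨y, hyS, hy⟩ := exists_fin_finrank_succ_sum_eq h0 hsmul
    (z := fun k => ⟨h k ^ w, (hh k).pow w⟩) (fun k _ => ⟨h k, hh k, rfl⟩) (s := Finset.univ)
  choose g hg hgy using hyS
  refine ⟨fun k => coeffVec u (g k), ?_⟩
  have := congrArg Subtype.val hy
  simp only [Submodule.coe_sum, hgy] at this
  simpa only [powerSum, ofCoeffVec_coeffVec (hg _)] using this

end PowerSum

namespace WaringCone

variable {n u w : ℕ}

lemma isHomogeneous {p : MvPolynomial (Fin n) ℝ} (hp : p ∈ WaringCone n u w) :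
    p.IsHomogeneous (u * w) := by
  obtain ⟨s, h, hh, rfl⟩ := hp
  exact IsHomogeneous.sum _ _ _ fun k _ => (hh k).pow w

lemma zero_mem : (0 : MvPolynomial (Fin n) ℝ) ∈ WaringCone n u w :=
  ⟨0, Fin.elim0, fun k => k.elim0, by simp⟩

lemma add_mem {p q : MvPolynomial (Fin n) ℝ} (hp : p ∈ WaringCone n u w)
    (hq : q ∈ WaringCone n u w) : p + q ∈ WaringCone n u w := by
  obtain ⟨s, h, hh, rfl⟩ := hp
  obtain ⟨t, g, hg, rfl⟩ := hq
  refine ⟨s + t, Fin.append h g, Fin.addCases (by simpa using hh) (by simpa using hg), ?_⟩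
  simp [Fin.sum_univ_add]

lemma compMat_mem {p : MvPolynomial (Fin n) ℝ} (hp : p ∈ WaringCone n u w)
    (M : Matrix (Fin n) (Fin n) ℝ) : compMat p M ∈ WaringCone n u w := by
  obtain ⟨s, h, hh, rfl⟩ := hp
  refine ⟨s, fun k => compMat (h k) M, fun k => ?_, by simp [compMat, map_sum, map_pow]⟩
  simpa [compMat] using (hh k).aeval (fun i => ∑ j, C (M i j) * X j)
    fun i => IsHomogeneous.sum _ _ _ fun j _ => isHomogeneous_C_mul_X _ _

lemma mem_of_coeffTendsto (hw : Even w) (hw0 : w ≠ 0) {f : ℕ → MvPolynomial (Fin n) ℝ}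
    {q : MvPolynomial (Fin n) ℝ} (hf : ∀ m, f m ∈ WaringCone n u w) (hq : CoeffTendsto f q) :
    q ∈ WaringCone n u w := by
  let Φ := fun c : Fin (Module.finrank ℝ (homogeneousSubmodule (Fin n) ℝ (u * w)) + 1) →
    exponentsOfDegree n u → ℝ => coeffVec (u * w) (powerSum w c)
  have hproper : IsProperMap Φ := by
    refine isProperMap_of_pos_homogeneous (continuous_coeffVec_powerSum w _) hw0
      (fun t _ c => ?_) (fun c hc => eq_zero_of_powerSum_eq_zero hw hw0 ?_)
    · funext i
      simp only [Φ, coeffVec, powerSum_smul, coeff_C_mul, Pi.smul_apply, smul_eq_mul]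
    · rw [← ofCoeffVec_coeffVec (isHomogeneous_powerSum w c)]
      exact (congrArg ofCoeffVec hc).trans (by simp [ofCoeffVec])
  have hlim : Tendsto (fun m => coeffVec (u * w) (f m)) atTop (nhds (coeffVec (u * w) q)) :=
    tendsto_pi_nhds.mpr fun i => hq i
  obtain ⟨c, hc⟩ := hproper.isClosed_range.mem_of_tendsto hlim
    (Eventually.of_forall fun m => (exists_powerSum_eq hw0 (hf m)).imp fun c hc =>
      congrArg (coeffVec (u * w)) hc)
  have hhom : q.IsHomogeneous (u * w) := .of_coeffTendsto (fun m => isHomogeneous (hf m)) hq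
  rw [← ofCoeffVec_coeffVec hhom, ← hc, ofCoeffVec_coeffVec (isHomogeneous_powerSum w c)]
  exact powerSum_mem_waringCone w c

end WaringCone

theorem isBlender_waringCone_general (n u v r : ℕ) (hv : 0 < v) (huv : u * v = r) :
    IsBlender n (2 * r) (WaringCone n u (2 * v)) := by
  have hdeg : u * (2 * v) = 2 * r := by rw [← huv]; ring
  exact ⟨fun p hp => hdeg ▸ WaringCone.isHomogeneous hp, WaringCone.zero_mem,
    fun p hp q hq => WaringCone.add_mem hp hq,
    fun f q hf hq => WaringCone.mem_of_coeffTendsto (even_two_mul v) (by positivity) hf hq,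
    fun p hp M => WaringCone.compMat_mem hp M⟩

/-- If `uv = r`, then `W_{n,(u,2v)}` is a blender in `F_{n,2r}`; in particular it is
closed. -/
theorem isBlender_waringCone (n u v r : ℕ) (hu : 0 < u) (hv : 0 < v) (huv : u * v = r) :
    IsBlender n (2 * r) (WaringCone n u (2 * v)) :=
  isBlender_waringCone_general n u v r hv huv
end

section
/- If p ∈ F_{n,2r} is a convex function on ℝⁿ, then there exist an invertible n×n real matrix M, an integer m with 0 ≤ m ≤ n, and a form q of degree 2r in m variables which is positive definite on ℝ^m (q(w) > 0 for all 0 ≠ w ∈ ℝ^m), such that (p∘M)(x₁,…,xₙ) = q(x_{n−m+1},…,xₙ); that is, after an invertible linear change of variables, p depends only on its last m variables and is positive definite as a form in those variables. -/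
/-!
A convex form `f` of degree `2r > 0` is even and vanishes at `0`, hence is nonnegative. If
`f v = 0`, writing `x + v = (1 - t) • ((1 - t)⁻¹ • x) + t • (t⁻¹ • v)` and using convexity and
homogeneity gives `f (x + v) ≤ (1 - t) ^ (1 - 2r) f x`; letting `t → 0⁺` yields
`f (x + v) ≤ f x`, and the same with `-v` gives equality. So the zero set `V` of `f` is a subspace
along which `f` is translation invariant, and `f` is positive definite on any complement `W`.
In coordinates adapted to `V ⊕ W`, `f` only depends on the `W`-coordinates. A form of degree `0`
is constant and is handled with `V` the whole space.
-/

open MvPolynomial Filter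

open Matrix Module Set Topology

namespace MvPolynomial

variable {R σ τ : Type*} [CommRing R]

theorem IsHomogeneous.eval_smul {p : MvPolynomial σ R} {d : ℕ} (hp : p.IsHomogeneous d)
    (c : R) (x : σ → R) : eval (c • x) p = c ^ d * eval x p := by
  rw [eval_eq, eval_eq, Finset.mul_sum]
  refine Finset.sum_congr rfl fun i hi => ?_
  have hdeg : ∑ j ∈ i.support, i j = d := by
    rw [← hp (mem_support_iff.mp hi), Finsupp.weight_apply, Finsupp.sum]; simp
  simp only [Pi.smul_apply, smul_eq_mul, mul_pow, Finset.prod_mul_distrib,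
    Finset.prod_pow_eq_pow_sum, hdeg]
  ring

theorem eval_aeval (g : σ → MvPolynomial τ R) (x : τ → R) (p : MvPolynomial σ R) :
    eval x (aeval g p) = eval (fun j => eval x (g j)) p := by
  rw [aeval_eq_bind₁]
  exact eval₂Hom_bind₁ _ _ _ _

variable [Fintype τ]

noncomputable def compMatrix (p : MvPolynomial σ R) (A : Matrix σ τ R) : MvPolynomial τ R :=
  aeval (fun j => ∑ k, C (A j k) * X k) p

theorem eval_compMatrix (p : MvPolynomial σ R) (A : Matrix σ τ R) (x : τ → R) :
    eval x (compMatrix p A) = eval (A *ᵥ x) p := by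
  rw [compMatrix, eval_aeval]
  congr
  ext j
  simp [mulVec, dotProduct]

theorem IsHomogeneous.compMatrix {p : MvPolynomial σ R} {d : ℕ} (hp : p.IsHomogeneous d)
    (A : Matrix σ τ R) : (compMatrix p A).IsHomogeneous d := by
  unfold MvPolynomial.compMatrix
  simpa only [one_mul] using
    hp.aeval _ fun j => IsHomogeneous.sum _ _ _ fun k _ => isHomogeneous_C_mul_X (A j k) k

end MvPolynomial

theorem compMat_eq_compMatrix {n : ℕ} (p : MvPolynomial (Fin n) ℝ) (M : Matrix (Fin n) (Fin n) ℝ) :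
    compMat p M = compMatrix p M :=
  rfl

section ConvexHomogeneous

variable {E : Type*} [AddCommGroup E] [Module ℝ E] {f : E → ℝ}

theorem ConvexOn.map_zero_le_of_even (hf : ConvexOn ℝ univ f) (heven : ∀ x, f (-x) = f x)
    (x : E) : f 0 ≤ f x := by
  have h := hf.2 (mem_univ x) (mem_univ (-x)) (by norm_num : (0 : ℝ) ≤ 1 / 2)
    (by norm_num : (0 : ℝ) ≤ 1 / 2) (by norm_num)
  rw [smul_neg, add_neg_cancel, heven, smul_eq_mul] at h
  linarith

theorem ConvexOn.map_add_le_of_map_eq_zero {k : ℕ} (hf : ConvexOn ℝ univ f)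
    (hhom : ∀ c : ℝ, 0 < c → ∀ x, f (c • x) = c ^ k * f x) {v : E} (hv : f v = 0) (x : E) :
    f (x + v) ≤ f x := by
  set g : ℝ → ℝ := fun t => (1 - t) * (1 - t)⁻¹ ^ k * f x
  have hbound : ∀ t ∈ Ioo (0 : ℝ) 1, f (x + v) ≤ g t := by
    rintro t ⟨ht0, ht1⟩
    have ht1' : 0 < 1 - t := sub_pos.2 ht1
    have hsplit : x + v = (1 - t) • ((1 - t)⁻¹ • x) + t • (t⁻¹ • v) := by
      rw [smul_inv_smul₀ ht1'.ne', smul_inv_smul₀ ht0.ne']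
    calc f (x + v) ≤ (1 - t) • f ((1 - t)⁻¹ • x) + t • f (t⁻¹ • v) :=
          hsplit ▸ hf.2 trivial trivial ht1'.le ht0.le (by ring)
      _ = g t := by
          rw [hhom _ (inv_pos.2 ht1'), hhom _ (inv_pos.2 ht0), hv]
          simp [g, mul_assoc]
  have hg : Tendsto g (𝓝[>] 0) (𝓝 (f x)) := by
    have : ContinuousAt g 0 := by fun_prop (disch := norm_num)
    simpa [g] using this.tendsto.mono_left nhdsWithin_le_nhds
  exact ge_of_tendsto hg (eventually_of_mem (Ioo_mem_nhdsGT one_pos) hbound)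

theorem ConvexOn.exists_isCompl_invariant_pos {r : ℕ} (hf : ConvexOn ℝ univ f)
    (hhom : ∀ (c : ℝ) x, f (c • x) = c ^ (2 * r) * f x) :
    ∃ V W : Submodule ℝ E, IsCompl V W ∧ (∀ v ∈ V, ∀ x, f (x + v) = f x) ∧
      ∀ w ∈ W, w ≠ 0 → 0 < f w := by
  obtain rfl | hr := r.eq_zero_or_pos
  · have hconst : ∀ x, f x = f 0 := fun x => by simpa using (hhom 0 x).symm
    refine ⟨⊤, ⊥, isCompl_top_bot, fun v _ x => by rw [hconst, hconst x], ?_⟩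
    rintro w hw hw0
    exact absurd ((Submodule.mem_bot ℝ).mp hw) hw0
  have hf0 : f 0 = 0 := by simpa [hr.ne'] using hhom 0 0
  have heven : ∀ x, f (-x) = f x := fun x => by
    simpa [pow_mul] using hhom (-1) x
  have hnonneg : ∀ x, 0 ≤ f x := fun x => hf0 ▸ hf.map_zero_le_of_even heven x
  have hinv : ∀ v, f v = 0 → ∀ x, f (x + v) = f x := fun v hv x => by
    refine le_antisymm (hf.map_add_le_of_map_eq_zero (fun c _ => hhom c) hv x) ?_
    simpa using hf.map_add_le_of_map_eq_zero (fun c _ => hhom c) ((heven v).trans hv) (x + v)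
  let V : Submodule ℝ E :=
    { carrier := {v | f v = 0}
      zero_mem' := hf0
      add_mem' := fun {u w} hu hw => (hinv w hw u).trans hu
      smul_mem' := fun c v (hv : f v = 0) => by simp [hhom, hv] }
  obtain ⟨W, hVW⟩ := V.exists_isCompl
  refine ⟨V, W, hVW, hinv, fun w hw hw0 => (hnonneg w).lt_of_ne fun h => hw0 ?_⟩
  exact Submodule.disjoint_def.mp hVW.disjoint w h.symm hw

end ConvexHomogeneous

theorem Submodule.exists_isUnit_mulVec_sub_mem_of_isCompl {K : Type*} [Field K] {n : ℕ}
    {V W : Submodule K (Fin n → K)} (h : IsCompl V W) :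
    ∃ (m : ℕ) (hm : m ≤ n) (M : Matrix (Fin n) (Fin n) K) (B : Matrix (Fin n) (Fin m) K),
      IsUnit M ∧ (∀ y, B *ᵥ y ∈ W) ∧ Function.Injective B.mulVec ∧
      ∀ x, M *ᵥ x - B *ᵥ (fun l : Fin m => x ⟨n - m + l, by omega⟩) ∈ V := by
  have hn : finrank K V + finrank K W = n := by
    rw [Submodule.finrank_add_eq_of_isCompl h, Module.finrank_fin_fun]
  set d := finrank K V
  set m := finrank K W
  let bV := Module.finBasis K V
  let bW := Module.finBasis K W
  let e : Fin n ≃ Fin d ⊕ Fin m := (finCongr hn.symm).trans finSumFinEquiv.symm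
  let E : (Fin n → K) ≃ₗ[K] (Fin n → K) :=
    (LinearEquiv.funCongrLeft K K e.symm).trans
      ((LinearEquiv.sumArrowLequivProdArrow (Fin d) (Fin m) K K).trans
        ((bV.equivFun.symm.prodCongr bW.equivFun.symm).trans
          (Submodule.prodEquivOfIsCompl V W h)))
  let B : (Fin m → K) →ₗ[K] (Fin n → K) := W.subtype ∘ₗ bW.equivFun.symm.toLinearMap
  refine ⟨m, by omega, LinearMap.toMatrix' E, LinearMap.toMatrix' B, ?_, fun y => ?_, ?_,
    fun x => ?_⟩
  · rw [Matrix.isUnit_iff_isUnit_det, LinearMap.det_toMatrix']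
    exact E.isUnit_det'
  · rw [LinearMap.toMatrix'_mulVec]
    exact (bW.equivFun.symm y).2
  · have hB : (LinearMap.toMatrix' B).mulVec = B := funext (LinearMap.toMatrix'_mulVec B)
    rw [hB]
    exact W.injective_subtype.comp bW.equivFun.symm.injective
  · have hlast : (fun l : Fin m => x ⟨n - m + l, by omega⟩) = fun l => x (e.symm (.inr l)) := by
      ext l
      congr 1
      ext
      simp only [e, finSumFinEquiv, Equiv.symm_trans, Equiv.symm_mk, finCongr_symm,
        Equiv.trans_apply, Equiv.coe_fn_mk, Sum.elim_inr, finCongr_apply, Fin.val_cast,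
        Fin.val_natAdd]
      omega
    have hE : E x = ↑(bV.equivFun.symm fun i => x (e.symm (.inl i))) +
        ↑(bW.equivFun.symm fun l => x (e.symm (.inr l))) := rfl
    rw [LinearMap.toMatrix'_mulVec, LinearMap.toMatrix'_mulVec, hlast, LinearEquiv.coe_coe, hE]
    convert Submodule.coe_mem (bV.equivFun.symm fun i => x (e.symm (.inl i))) using 1
    exact add_sub_cancel_right _ _

/-- A convex form is, after an invertible linear change of variables, a positive definite
form in its last `m` variables, for some `0 ≤ m ≤ n`. -/
theorem convex_form_structure (n r : ℕ) (p : MvPolynomial (Fin n) ℝ)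
    (hp : p.IsHomogeneous (2 * r))
    (hconv : ConvexOn ℝ Set.univ (fun x : Fin n → ℝ => eval x p)) :
    ∃ M : Matrix (Fin n) (Fin n) ℝ, IsUnit M ∧
      ∃ (m : ℕ) (hm : m ≤ n) (q : MvPolynomial (Fin m) ℝ),
        q.IsHomogeneous (2 * r) ∧
        (∀ w : Fin m → ℝ, w ≠ 0 → 0 < eval w q) ∧
        ∀ x : Fin n → ℝ,
          eval x (compMat p M) =
            eval (fun j : Fin m => x ⟨n - m + (j : ℕ), by have := j.2; omega⟩) q := by
  obtain ⟨V, W, hVW, hinv, hpos⟩ :=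
    hconv.exists_isCompl_invariant_pos hp.eval_smul
  obtain ⟨m, hm, M, B, hM, hBW, hBinj, hMB⟩ := Submodule.exists_isUnit_mulVec_sub_mem_of_isCompl hVW
  refine ⟨M, hM, m, hm, compMatrix p B, hp.compMatrix B, fun w hw => ?_, fun x => ?_⟩
  · rw [eval_compMatrix]
    exact hpos _ (hBW w) fun h => hw (hBinj (h.trans (mulVec_zero B).symm))
  · rw [compMat_eq_compMatrix, eval_compMatrix, eval_compMatrix]
    have h := hinv _ (hMB x) (B *ᵥ fun l : Fin m => x ⟨n - m + l, by omega⟩)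
    rwa [add_sub_cancel] at h
end

section
/- Let p ∈ F_{n,2r} be a psd form with p(1,0,…,0) > 0, and define the polynomial q on ℝ^{n−1} by q(x₂,…,xₙ) = p(1,x₂,…,xₙ). Then p is a convex function on ℝⁿ if and only if the function (x₂,…,xₙ) ↦ q(x₂,…,xₙ)^{1/(2r)} is convex on ℝ^{n−1}. -/
open MvPolynomial Filter

/-!
Put `f = p ^ (1 / 2r)`: it is nonnegative, positively homogeneous of degree one, and its
restriction to the hyperplane `x₀ = 1` is `q ^ (1 / 2r)`.

If `p = f ^ 2r` is convex, then so is the sublevel set `{f ≤ 1} = {p ≤ 1}`, and a nonnegative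
one-homogeneous function with a convex unit sublevel set is convex; restricting to `x₀ = 1`
gives the convexity of `q ^ (1 / 2r)`.

Conversely, on the open half-space `x₀ > 0` the function `f` is the perspective of
`q ^ (1 / 2r)`, hence convex, and so is `p = f ^ 2r` there. By continuity `p` is convex on
`x₀ ≥ 0`, by evenness on `x₀ ≤ 0`. A differentiable function convex on two closed sets covering
the space is convex: on every line its derivative is monotone on both pieces, which meet.
-/

open Set

theorem MvPolynomial.IsHomogeneous.eval_smul_s9 {σ R : Type*} [Fintype σ] [CommSemiring R]
    {p : MvPolynomial σ R} {d : ℕ} (hp : p.IsHomogeneous d) (c : R) (x : σ → R) :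
    eval (c • x) p = c ^ d * eval x p := by
  rw [eval_eq, eval_eq, Finset.mul_sum]
  refine Finset.sum_congr rfl fun e he => ?_
  have hdeg : ∑ i ∈ e.support, e i = d := by
    simpa [Finsupp.weight_apply, Finsupp.sum] using hp (mem_support_iff.mp he)
  simp only [Pi.smul_apply, smul_eq_mul, mul_pow, Finset.prod_mul_distrib,
    Finset.prod_pow_eq_pow_sum, hdeg]
  ring

section RealVectorSpace

variable {E : Type*} [AddCommGroup E] [Module ℝ E]

theorem convexOn_univ_of_convex_setOf_le_one {f : E → ℝ} (hf₀ : ∀ x, 0 ≤ f x)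
    (hf : ∀ c : ℝ, 0 < c → ∀ x, f (c • x) = c * f x) (hconv : Convex ℝ {x | f x ≤ 1}) :
    ConvexOn ℝ univ f := by
  have rescale : ∀ {t : ℝ} {x : E}, 0 < t → (f (t⁻¹ • x) ≤ 1 ↔ f x ≤ t) := fun ht => by
    rw [hf _ (inv_pos.2 ht), inv_mul_le_iff₀ ht, mul_one]
  refine ⟨convex_univ, fun u _ v _ a b ha hb hab => le_of_forall_pos_le_add fun ε hε => ?_⟩
  set α := f u + ε
  set β := f v + ε
  set s := a * α + b * β
  have hα : 0 < α := by linarith [hf₀ u]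
  have hβ : 0 < β := by linarith [hf₀ v]
  have hs : s = a * f u + b * f v + ε := by linear_combination ε * hab
  have hs₀ : 0 < s := hs ▸ add_pos_of_nonneg_of_pos
    (add_nonneg (mul_nonneg ha (hf₀ u)) (mul_nonneg hb (hf₀ v))) hε
  have hcomb : s⁻¹ • (a • u + b • v) = (a * α / s) • (α⁻¹ • u) + (b * β / s) • (β⁻¹ • v) := by
    simp only [smul_add, smul_smul]
    congr 2 <;> field_simp
  have hle : f ((a * α / s) • (α⁻¹ • u) + (b * β / s) • (β⁻¹ • v)) ≤ 1 :=
    hconv ((rescale hα).2 (le_add_of_nonneg_right hε.le))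
      ((rescale hβ).2 (le_add_of_nonneg_right hε.le)) (by positivity) (by positivity)
      (by rw [← add_div, div_self hs₀.ne'])
  rw [← hcomb, rescale hs₀, hs] at hle
  simpa only [smul_eq_mul] using hle

theorem ConvexOn.of_pow_of_homogeneous {f : E → ℝ} {d : ℕ} (hd : d ≠ 0) (hf₀ : ∀ x, 0 ≤ f x)
    (hf : ∀ c : ℝ, 0 < c → ∀ x, f (c • x) = c * f x) (hfd : ConvexOn ℝ univ (f ^ d)) :
    ConvexOn ℝ univ f := by
  refine convexOn_univ_of_convex_setOf_le_one hf₀ hf ?_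
  simpa [pow_le_one_iff_of_nonneg (hf₀ _) hd] using hfd.convex_le 1

theorem ConvexOn.perspective {g : E → ℝ} {s : Set E} (hg : ConvexOn ℝ s g) :
    ConvexOn ℝ {p : ℝ × E | 0 < p.1 ∧ p.1⁻¹ • p.2 ∈ s} (fun p => p.1 * g (p.1⁻¹ • p.2)) := by
  have key : ∀ ⦃t t' a b : ℝ⦄ ⦃x x' : E⦄, 0 < t → 0 < t' → 0 ≤ a → 0 ≤ b → a + b = 1 →
      0 < a * t + b * t' ∧ a * t / (a * t + b * t') + b * t' / (a * t + b * t') = 1 ∧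
      (a * t + b * t')⁻¹ • (a • x + b • x') =
        (a * t / (a * t + b * t')) • (t⁻¹ • x) + (b * t' / (a * t + b * t')) • (t'⁻¹ • x') := by
    intro t t' a b x x' ht ht' ha hb hab
    have hS : 0 < a * t + b * t' := (convex_Ioi (0 : ℝ)) ht ht' ha hb hab
    refine ⟨hS, by rw [← add_div, div_self hS.ne'], ?_⟩
    simp only [smul_add, smul_smul]
    congr 2 <;> field_simp
  refine ⟨?_, ?_⟩ <;>
    rintro ⟨t, x⟩ ⟨ht, hx⟩ ⟨t', x'⟩ ⟨ht', hx'⟩ a b ha hb hab <;>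
    simp only [Prod.smul_mk, Prod.mk_add_mk, smul_eq_mul] at ht ht' hx hx' ⊢ <;>
    obtain ⟨hS, hw, hcomb⟩ := key (x := x) (x' := x') ht ht' ha hb hab
  · exact ⟨hS, hcomb ▸ hg.1 hx hx' (by positivity) (by positivity) hw⟩
  · rw [hcomb]
    calc (a * t + b * t') * g _
        ≤ (a * t + b * t') * (a * t / (a * t + b * t') * g (t⁻¹ • x) +
            b * t' / (a * t + b * t') * g (t'⁻¹ • x')) :=
          mul_le_mul_of_nonneg_left (hg.2 hx hx' (by positivity) (by positivity) hw) hS.le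
      _ = a * (t * g (t⁻¹ • x)) + b * (t' * g (t'⁻¹ • x')) := by field_simp

variable [TopologicalSpace E] [ContinuousAdd E] [ContinuousSMul ℝ E]

theorem ConvexOn.of_subset_closure {s t : Set E} {f : E → ℝ} (hf : ConvexOn ℝ s f)
    (hcont : Continuous f) (ht : Convex ℝ t) (hts : t ⊆ closure s) : ConvexOn ℝ t f := by
  refine ⟨ht, fun x hx y hy a b ha hb hab => ?_⟩
  have : closure (s ×ˢ s) ⊆ {q : E × E | f (a • q.1 + b • q.2) ≤ a • f q.1 + b • f q.2} :=
    closure_minimal (fun q hq => hf.2 hq.1 hq.2 ha hb hab) (isClosed_le (by fun_prop) (by fun_prop))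
  rw [closure_prod_eq] at this
  exact this (show (x, y) ∈ closure s ×ˢ closure s from ⟨hts hx, hts hy⟩)

end RealVectorSpace

theorem monotone_of_monotoneOn_of_isClosed_union {g : ℝ → ℝ} {s t : Set ℝ} (hs : IsClosed s)
    (ht : IsClosed t) (hst : s ∪ t = univ) (hgs : MonotoneOn g s) (hgt : MonotoneOn g t) :
    Monotone g := by
  have across : ∀ {s t : Set ℝ}, IsClosed s → IsClosed t → s ∪ t = univ → MonotoneOn g s →
      MonotoneOn g t → ∀ {a b}, a ∈ s → b ∈ t → a ≤ b → g a ≤ g b := by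
    intro s t hs ht hst hgs hgt a b ha hb hab
    obtain ⟨c, ⟨hac, hcb⟩, hcs, hct⟩ := isPreconnected_closed_iff.1 isPreconnected_Icc s t hs ht
      (hst ▸ subset_univ _) ⟨a, left_mem_Icc.2 hab, ha⟩ ⟨b, right_mem_Icc.2 hab, hb⟩
    exact (hgs ha hcs hac).trans (hgt hct hb hcb)
  intro a b hab
  have ha : a ∈ s ∪ t := hst ▸ mem_univ a
  have hb : b ∈ s ∪ t := hst ▸ mem_univ b
  rcases ha with ha | ha <;> rcases hb with hb | hb
  · exact hgs ha hb hab
  · exact across hs ht hst hgs hgt ha hb hab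
  · exact across ht hs (union_comm s t ▸ hst) hgt hgs ha hb hab
  · exact hgt ha hb hab

theorem Differentiable.convexOn_univ_of_isClosed_union {E : Type*} [NormedAddCommGroup E]
    [NormedSpace ℝ E] {f : E → ℝ} (hf : Differentiable ℝ f) {s t : Set E} (hs : IsClosed s)
    (ht : IsClosed t) (hst : s ∪ t = univ) (hfs : ConvexOn ℝ s f) (hft : ConvexOn ℝ t f) :
    ConvexOn ℝ univ f := by
  refine ⟨convex_univ, fun u _ v _ a b ha hb hab => ?_⟩
  let L : ℝ →ᵃ[ℝ] E := AffineMap.lineMap u v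
  have hL : Continuous L := AffineMap.lineMap_continuous
  have hLd : Differentiable ℝ L := fun _ => AffineMap.hasDerivAt_lineMap.differentiableAt
  have hline : ConvexOn ℝ univ (f ∘ L) := by
    refine Monotone.convexOn_univ_of_deriv (hf.comp hLd) ?_
    refine monotone_of_monotoneOn_of_isClosed_union (hs.preimage hL) (ht.preimage hL)
      (by rw [← preimage_union, hst, preimage_univ]) ?_ ?_
    · exact (hfs.comp_affineMap L).monotoneOn_deriv fun x _ => (hf.comp hLd) x
    · exact (hft.comp_affineMap L).monotoneOn_deriv fun x _ => (hf.comp hLd) x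
  have := hline.2 (mem_univ 0) (mem_univ 1) ha hb hab
  obtain rfl : a = 1 - b := by linarith
  simpa [L, AffineMap.lineMap_apply_module] using this

theorem convexOn_univ_of_even_of_convexOn_pos {ι : Type*} [Fintype ι] {i : ι}
    {f : (ι → ℝ) → ℝ} (hf : Differentiable ℝ f) (heven : ∀ x, f (-x) = f x)
    (hpos : ConvexOn ℝ {x | 0 < x i} f) : ConvexOn ℝ univ f := by
  have hclosure : {x : ι → ℝ | 0 ≤ x i} ⊆ closure {x | 0 < x i} := by
    have h := (isOpenMap_eval (X := fun _ : ι => ℝ) i).preimage_closure_eq_closure_preimage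
      (continuous_apply i) (Ioi 0)
    rw [closure_Ioi] at h
    exact h.subset
  have hnonneg : ConvexOn ℝ {x | 0 ≤ x i} f :=
    hpos.of_subset_closure hf.continuous (convex_halfSpace_ge (LinearMap.proj i).isLinear 0)
      hclosure
  have hnonpos : ConvexOn ℝ {x | x i ≤ 0} f := by
    simpa [Function.comp_def, heven] using hnonneg.comp_linearMap (-LinearMap.id (R := ℝ))
  exact hf.convexOn_univ_of_isClosed_union (isClosed_le continuous_const (continuous_apply i))
    (isClosed_le (continuous_apply i) continuous_const) (by ext; simp [le_total]) hnonneg hnonpos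

theorem ConvexOn.comp_fin_cons {m : ℕ} {F : (Fin (m + 1) → ℝ) → ℝ} (hF : ConvexOn ℝ univ F)
    (c : ℝ) : ConvexOn ℝ univ (fun y : Fin m → ℝ => F (Fin.cons c y)) := by
  refine ⟨convex_univ, fun y _ z _ a b ha hb hab => ?_⟩
  have hcons : (Fin.cons c (a • y + b • z) : Fin (m + 1) → ℝ) =
      a • Fin.cons c y + b • Fin.cons c z := by
    ext i
    refine Fin.cases ?_ (fun j => ?_) i
    · simp [← add_mul, hab]
    · simp
  simpa only [hcons] using hF.2 (mem_univ _) (mem_univ _) ha hb hab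

theorem convexOn_pos_of_convexOn_cons_one {m : ℕ} {F : (Fin (m + 1) → ℝ) → ℝ}
    (hF : ∀ c : ℝ, 0 < c → ∀ x, F (c • x) = c * F x)
    (hg : ConvexOn ℝ univ (fun y : Fin m → ℝ => F (Fin.cons 1 y))) :
    ConvexOn ℝ {x | 0 < x 0} F := by
  let L := (Fin.consLinearEquiv ℝ fun _ : Fin (m + 1) => ℝ).symm.toLinearMap
  have hL : ∀ x, L x = (x 0, Fin.tail x) := fun x => rfl
  have hset : {x : Fin (m + 1) → ℝ | 0 < x 0} = L ⁻¹' {p | 0 < p.1 ∧ p.1⁻¹ • p.2 ∈ univ} := by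
    ext x; simp [hL]
  rw [hset]
  refine (hg.perspective.comp_linearMap L).congr fun x hx => ?_
  have hx : 0 < x 0 := by simpa [hL] using hx
  calc (L x).1 * F (Fin.cons 1 ((L x).1⁻¹ • (L x).2))
      = F (x 0 • Fin.cons 1 ((x 0)⁻¹ • Fin.tail x)) := by rw [hF _ hx, hL]
    _ = F x := by
      congr 1
      ext i
      refine Fin.cases ?_ (fun j => ?_) i
      · simp
      · simp [Fin.tail, hx.ne']

theorem convex_iff_dehomog_root_convex_general (m r : ℕ) (hr : 0 < r)
    (p : MvPolynomial (Fin (m + 1)) ℝ) (hp : p.IsHomogeneous (2 * r))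
    (hpsd : ∀ u : Fin (m + 1) → ℝ, 0 ≤ eval u p) :
    ConvexOn ℝ Set.univ (fun x : Fin (m + 1) → ℝ => eval x p) ↔
      ConvexOn ℝ Set.univ
        (fun y : Fin m → ℝ => (eval (Fin.cons 1 y) p) ^ ((1 : ℝ) / (2 * r))) := by
  have hd : 2 * r ≠ 0 := by omega
  have hexp : (1 : ℝ) / (2 * r) = ((2 * r : ℕ) : ℝ)⁻¹ := by push_cast; rw [one_div]
  set P := fun x : Fin (m + 1) → ℝ => eval x p
  set f := fun x : Fin (m + 1) → ℝ => eval x p ^ ((1 : ℝ) / (2 * r))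
  have hf₀ : ∀ x, 0 ≤ f x := fun x => Real.rpow_nonneg (hpsd x) _
  have hf_pow : f ^ (2 * r) = P :=
    funext fun x => by simp only [f, P, Pi.pow_apply, hexp, Real.rpow_inv_natCast_pow (hpsd x) hd]
  have hf_smul : ∀ c : ℝ, 0 < c → ∀ x, f (c • x) = c * f x := fun c hc x => by
    simp only [f, hp.eval_smul_s9, hexp, Real.mul_rpow (pow_nonneg hc.le _) (hpsd x),
      Real.pow_rpow_inv_natCast hc.le hd]
  constructor
  · intro hP
    exact (ConvexOn.of_pow_of_homogeneous hd hf₀ hf_smul (hf_pow ▸ hP)).comp_fin_cons 1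
  · intro hq
    have hpos : ConvexOn ℝ {x | 0 < x 0} P :=
      hf_pow ▸ (convexOn_pos_of_convexOn_cons_one hf_smul hq).pow (fun x _ => hf₀ x) (2 * r)
    have hP_neg : ∀ x, P (-x) = P x := fun x => by
      simp only [P]
      rw [← neg_one_smul ℝ x, hp.eval_smul_s9, (even_two_mul r).neg_one_pow, one_mul]
    exact convexOn_univ_of_even_of_convexOn_pos
      (fun x => (AnalyticOnNhd.eval_mvPolynomial p x (mem_univ x)).differentiableAt) hP_neg hpos

/-- A psd form `p` of degree `2r` with `p(1,0,…,0) > 0` is convex iff the `2r`-th root of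
its dehomogenization `q(x₂,…,xₙ) = p(1,x₂,…,xₙ)` is convex. -/
theorem convex_iff_dehomog_root_convex (m r : ℕ) (hr : 0 < r)
    (p : MvPolynomial (Fin (m + 1)) ℝ) (hp : p.IsHomogeneous (2 * r))
    (hpsd : ∀ u : Fin (m + 1) → ℝ, 0 ≤ eval u p)
    (h1 : 0 < eval (Fin.cons 1 (0 : Fin m → ℝ)) p) :
    ConvexOn ℝ Set.univ (fun x : Fin (m + 1) → ℝ => eval x p) ↔
      ConvexOn ℝ Set.univ
        (fun y : Fin m → ℝ => (eval (Fin.cons 1 y) p) ^ ((1 : ℝ) / (2 * r))) :=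
  convex_iff_dehomog_root_convex_general m r hr p hp hpsd
end

section
/- Let r ≥ 1 be an integer and a > 0 a real number. The binary form (x² + y²)^r (x² + a y²) is a convex function on ℝ² if and only if a + 1/a ≤ 8r + 18 + 8/r. -/
/-!
Along the line through `v = (x, y)` in direction `d = (h, k)`, the second derivative of
`(x² + y²)^r (x² + a y²)` is `(x² + y²)^(r-2) (A h² + 2B hk + C k²)` with `A > 0` for `v ≠ 0`, so
convexity amounts to `AC - B² ≥ 0` everywhere. This determinant is `4(2r+1)(x² + y²)² q(x², y²)`
for a binary quadratic form `q` whose discriminant is a positive multiple of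
`r(a² + 1) - (8r² + 18r + 8)a` (for `a ≠ 1`). When this is `≤ 0`, `q` is nonnegative; otherwise the
middle coefficient of `q` is negative too, so `q` is negative somewhere on the positive quadrant.
-/

open Set

theorem convexOn_univ_iff_forall_line {𝕜 E β : Type*} [CommRing 𝕜] [PartialOrder 𝕜]
    [AddCommGroup E] [Module 𝕜 E] [AddCommMonoid β] [PartialOrder β] [SMul 𝕜 β] {f : E → β} :
    ConvexOn 𝕜 univ f ↔ ∀ v d : E, ConvexOn 𝕜 univ fun t : 𝕜 => f (v + t • d) := by
  refine ⟨fun hf v d => ⟨convex_univ, fun s _ t _ α β hα hβ hαβ => ?_⟩,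
    fun hline => ⟨convex_univ, fun x _ y _ α β hα hβ hαβ => ?_⟩⟩
  · have hpt : v + (α • s + β • t) • d = α • (v + s • d) + β • (v + t • d) := by
      calc v + (α • s + β • t) • d = (α + β) • v + (α • s + β • t) • d := by rw [hαβ, one_smul]
        _ = α • (v + s • d) + β • (v + t • d) := by module
    dsimp only
    rw [hpt]
    exact hf.2 trivial trivial hα hβ hαβ
  · obtain rfl : α = 1 - β := eq_sub_of_add_eq hαβ
    have h := (hline x (y - x)).2 (mem_univ 0) (mem_univ 1) hα hβ hαβ
    have hpt : x + ((1 - β) • (0 : 𝕜) + β • (1 : 𝕜)) • (y - x) = (1 - β) • x + β • y := by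
      simp only [smul_eq_mul, mul_zero, mul_one, zero_add]
      module
    simpa only [hpt, zero_smul, add_zero, one_smul, add_sub_cancel] using h

theorem convexOn_univ_iff_forall_nonneg_of_hasDerivAt2 {f f' f'' : ℝ → ℝ}
    (hf : ∀ t, HasDerivAt f (f' t) t) (hf' : ∀ t, HasDerivAt f' (f'' t) t) :
    ConvexOn ℝ univ f ↔ ∀ t, 0 ≤ f'' t := by
  have hderiv : deriv f = f' := funext fun t => (hf t).deriv
  refine ⟨fun hconv t => ?_, fun hf'' => ?_⟩
  · have hmono : Monotone f' := by
      rw [← monotoneOn_univ, ← hderiv]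
      exact hconv.monotoneOn_deriv fun t _ => (hf t).differentiableAt
    exact (hf' t).deriv ▸ hmono.deriv_nonneg
  · refine convexOn_univ_of_deriv2_nonneg (fun t => (hf t).differentiableAt) ?_ fun t => ?_
    · rw [hderiv]
      exact fun t => (hf' t).differentiableAt
    · simpa [hderiv, (hf' t).deriv] using hf'' t

theorem quadratic_form_nonneg_iff {K : Type*} [Field K] [LinearOrder K] [IsStrictOrderedRing K]
    {A B C : K} (hA : 0 < A) :
    (∀ s t : K, 0 ≤ A * s ^ 2 + 2 * B * s * t + C * t ^ 2) ↔ B ^ 2 ≤ A * C := by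
  have key : ∀ s t : K,
      A * (A * s ^ 2 + 2 * B * s * t + C * t ^ 2) = (A * s + B * t) ^ 2 + (A * C - B ^ 2) * t ^ 2 :=
    fun s t => by ring
  refine ⟨fun h => ?_, fun h s t => ?_⟩
  · have hwit := mul_nonneg hA.le (h (-B) A)
    rw [key, show A * -B + B * A = 0 by ring, zero_pow two_ne_zero, zero_add] at hwit
    exact sub_nonneg.mp (nonneg_of_mul_nonneg_left hwit (by positivity))
  · refine (mul_nonneg_iff_of_pos_left hA).mp ?_
    rw [key]
    have := sub_nonneg.mpr h
    positivity

noncomputable section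

namespace PowMulForm

def diagForm (a : ℝ) (v w : ℝ × ℝ) : ℝ := v.1 * w.1 + a * (v.2 * w.2)

theorem diagForm_comm (a : ℝ) (v w : ℝ × ℝ) : diagForm a v w = diagForm a w v := by
  simp only [diagForm]
  ring

theorem diagForm_self_nonneg {a : ℝ} (ha : 0 ≤ a) (v : ℝ × ℝ) : 0 ≤ diagForm a v v := by
  simp only [diagForm, ← sq]
  positivity

theorem diagForm_one_self_pos {v : ℝ × ℝ} (hv : v ≠ 0) : 0 < diagForm 1 v v := by
  have : v.1 ≠ 0 ∨ v.2 ≠ 0 := by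
    by_contra! h
    exact hv (Prod.ext h.1 h.2)
  simp only [diagForm, one_mul, ← sq]
  rcases this with h | h <;> positivity

theorem hasDerivAt_diagForm_line (a : ℝ) (v d w e : ℝ × ℝ) (t : ℝ) :
    HasDerivAt (fun t => diagForm a (v + t • d) (w + t • e))
      (diagForm a d (w + t • e) + diagForm a (v + t • d) e) t := by
  have hline : ∀ c c' : ℝ, HasDerivAt (fun t => c + t * c') c' t := fun c c' => by
    simpa using ((hasDerivAt_id t).mul_const c').const_add c
  have hfun : (fun t => diagForm a (v + t • d) (w + t • e))
      = fun t => (v.1 + t * d.1) * (w.1 + t * e.1) + a * ((v.2 + t * d.2) * (w.2 + t * e.2)) := by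
    ext
    simp [diagForm]
  rw [hfun]
  refine (((hline v.1 d.1).fun_mul (hline w.1 e.1)).fun_add
    (((hline v.2 d.2).fun_mul (hline w.2 e.2)).const_mul a)).congr_deriv ?_
  simp only [diagForm, Prod.fst_add, Prod.snd_add, Prod.smul_fst, Prod.smul_snd, smul_eq_mul]
  ring

section Hessian

variable (p a : ℝ) (v : ℝ × ℝ)

def hessCoeff₁₁ : ℝ :=
  4 * p * (p - 1) * v.1 ^ 2 * diagForm a v v + 2 * p * diagForm 1 v v * diagForm a v v
    + 8 * p * diagForm 1 v v * v.1 ^ 2 + 2 * diagForm 1 v v ^ 2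

def hessCoeff₁₂ : ℝ :=
  4 * p * (p - 1) * v.1 * v.2 * diagForm a v v + 4 * p * (1 + a) * diagForm 1 v v * v.1 * v.2

def hessCoeff₂₂ : ℝ :=
  4 * p * (p - 1) * v.2 ^ 2 * diagForm a v v + 2 * p * diagForm 1 v v * diagForm a v v
    + 8 * p * a * diagForm 1 v v * v.2 ^ 2 + 2 * a * diagForm 1 v v ^ 2

def reducedHessDet (X Y : ℝ) : ℝ :=
  (p + 1) * (a + p) * X ^ 2 + (2 * (p ^ 2 + 3 * p + 1) * a - p * (a ^ 2 + 1)) * X * Y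
    + (p + 1) * a * (1 + a * p) * Y ^ 2

theorem hessCoeff_det :
    hessCoeff₁₁ p a v * hessCoeff₂₂ p a v - hessCoeff₁₂ p a v ^ 2
      = 4 * (2 * p + 1) * diagForm 1 v v ^ 2 * reducedHessDet p a (v.1 ^ 2) (v.2 ^ 2) := by
  simp only [hessCoeff₁₁, hessCoeff₁₂, hessCoeff₂₂, reducedHessDet, diagForm]
  ring

variable {p a v}

theorem hessCoeff₁₁_pos (hp : 1 ≤ p) (ha : 0 ≤ a) (hv : v ≠ 0) : 0 < hessCoeff₁₁ p a v := by
  have hU := diagForm_one_self_pos hv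
  have hW := diagForm_self_nonneg ha v
  have hp1 : 0 ≤ p - 1 := sub_nonneg.mpr hp
  simp only [hessCoeff₁₁]
  positivity

theorem forall_reducedHessDet_nonneg_iff (hp : 0 < p) (ha : 0 ≤ a) :
    (∀ x y : ℝ, 0 ≤ reducedHessDet p a (x ^ 2) (y ^ 2))
      ↔ (a ^ 2 + 1) * p ≤ (8 * p ^ 2 + 18 * p + 8) * a := by
  set P := (p + 1) * (a + p)
  set c := 2 * (p ^ 2 + 3 * p + 1) * a - p * (a ^ 2 + 1)
  set R := (p + 1) * a * (1 + a * p)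
  have hP : 0 < P := by positivity
  have hdisc : 4 * P * R - c ^ 2
      = p * (a - 1) ^ 2 * ((8 * p ^ 2 + 18 * p + 8) * a - (a ^ 2 + 1) * p) := by
    ring
  have hform : ∀ X Y, reducedHessDet p a X Y = P * X ^ 2 + 2 * (c / 2) * X * Y + R * Y ^ 2 := by
    intro X Y
    simp only [reducedHessDet, P, c, R]
    ring
  refine ⟨fun h => ?_, fun h x y => ?_⟩
  · by_contra! hlt
    have hc : c < 0 := by nlinarith
    have ha1 : a ≠ 1 := by
      rintro rfl
      nlinarith
    have hneg : 4 * P * R - c ^ 2 < 0 := by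
      rw [hdisc]
      exact mul_neg_of_pos_of_neg (by positivity [sub_ne_zero.mpr ha1]) (by linarith)
    -- `q(-c, 2P) = P (4PR - c²)`
    have hwit := h (Real.sqrt (-c)) (Real.sqrt (2 * P))
    rw [Real.sq_sqrt (by linarith), Real.sq_sqrt (by positivity), hform] at hwit
    nlinarith
  · rw [hform]
    refine (quadratic_form_nonneg_iff hP).mpr ?_ (x ^ 2) (y ^ 2)
    have hnonneg : 0 ≤ 4 * P * R - c ^ 2 := by
      rw [hdisc]
      have := sub_nonneg.mpr h
      positivity
    linarith [show (c / 2) ^ 2 = c ^ 2 / 4 by ring]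

end Hessian

variable (r : ℕ) (a : ℝ)

def form (v : ℝ × ℝ) : ℝ := diagForm 1 v v ^ r * diagForm a v v

def formDeriv (v d : ℝ × ℝ) : ℝ :=
  r * diagForm 1 v v ^ (r - 1) * (2 * diagForm 1 v d) * diagForm a v v
    + diagForm 1 v v ^ r * (2 * diagForm a v d)

-- At `r = 1` the truncated `r - 2` is harmless: its coefficient `r - 1` vanishes.
def formHess (v d : ℝ × ℝ) : ℝ :=
  r * ((r - 1 : ℕ) * diagForm 1 v v ^ (r - 2) * (2 * diagForm 1 v d) ^ 2 * diagForm a v v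
      + diagForm 1 v v ^ (r - 1) * (2 * diagForm 1 d d * diagForm a v v
        + 2 * (2 * diagForm 1 v d) * (2 * diagForm a v d)))
    + diagForm 1 v v ^ r * (2 * diagForm a d d)

theorem hasDerivAt_form_line (v d : ℝ × ℝ) (t : ℝ) :
    HasDerivAt (fun t => form r a (v + t • d)) (formDeriv r a (v + t • d) d) t := by
  have hU := hasDerivAt_diagForm_line 1 v d v d t
  have hW := hasDerivAt_diagForm_line a v d v d t
  refine ((hU.fun_pow r).fun_mul hW).congr_deriv ?_
  simp only [formDeriv, diagForm_comm _ d]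
  ring

theorem hasDerivAt_formDeriv_line (v d : ℝ × ℝ) (t : ℝ) :
    HasDerivAt (fun t => formDeriv r a (v + t • d) d) (formHess r a (v + t • d) d) t := by
  have hU := hasDerivAt_diagForm_line 1 v d v d t
  have hW := hasDerivAt_diagForm_line a v d v d t
  have hU' : HasDerivAt (fun t => diagForm 1 (v + t • d) d) (diagForm 1 d d) t := by
    simpa [diagForm] using hasDerivAt_diagForm_line 1 v d d 0 t
  have hW' : HasDerivAt (fun t => diagForm a (v + t • d) d) (diagForm a d d) t := by
    simpa [diagForm] using hasDerivAt_diagForm_line a v d d 0 t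
  refine ((((hU.fun_pow (r - 1)).const_mul (r : ℝ)).fun_mul (hU'.const_mul 2)).fun_mul hW).fun_add
    ((hU.fun_pow r).fun_mul (hW'.const_mul 2)) |>.congr_deriv ?_
  simp only [formHess, diagForm_comm _ d, Nat.sub_sub, Nat.reduceAdd]
  ring

theorem convexOn_form_iff_forall_formHess_nonneg :
    ConvexOn ℝ univ (form r a) ↔ ∀ v d, 0 ≤ formHess r a v d := by
  have hline v d := convexOn_univ_iff_forall_nonneg_of_hasDerivAt2
    (hasDerivAt_form_line r a v d) (hasDerivAt_formDeriv_line r a v d)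
  rw [convexOn_univ_iff_forall_line]
  refine ⟨fun h v d => ?_, fun h v d => (hline v d).mpr fun t => h _ d⟩
  simpa using (hline v d).mp (h v d) 0

variable {r a}

theorem mul_formHess (hr : 1 ≤ r) (v d : ℝ × ℝ) :
    diagForm 1 v v * formHess r a v d = diagForm 1 v v ^ (r - 1)
      * (hessCoeff₁₁ r a v * d.1 ^ 2 + 2 * hessCoeff₁₂ r a v * d.1 * d.2
        + hessCoeff₂₂ r a v * d.2 ^ 2) := by
  obtain ⟨n, rfl⟩ := Nat.exists_eq_add_of_le' hr
  rcases n with _ | n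
  · simp only [formHess, hessCoeff₁₁, hessCoeff₁₂, hessCoeff₂₂, diagForm, tsub_self, pow_zero,
      Nat.cast_zero]
    ring
  · simp only [formHess, hessCoeff₁₁, hessCoeff₁₂, hessCoeff₂₂, diagForm, Nat.cast_add,
      Nat.cast_one, add_tsub_cancel_right, Nat.reduceSubDiff, pow_succ]
    ring

theorem forall_formHess_nonneg_iff (hr : 1 ≤ r) (ha : 0 ≤ a) (v : ℝ × ℝ) :
    (∀ d, 0 ≤ formHess r a v d) ↔ 0 ≤ reducedHessDet r a (v.1 ^ 2) (v.2 ^ 2) := by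
  rcases eq_or_ne v 0 with rfl | hv
  · simp [formHess, reducedHessDet, diagForm, Nat.one_le_iff_ne_zero.mp hr]
  have hU := diagForm_one_self_pos hv
  have hp : (1 : ℝ) ≤ r := by exact_mod_cast hr
  calc (∀ d, 0 ≤ formHess r a v d)
      ↔ ∀ s t, 0 ≤ hessCoeff₁₁ r a v * s ^ 2 + 2 * hessCoeff₁₂ r a v * s * t
          + hessCoeff₂₂ r a v * t ^ 2 := by
        rw [Prod.forall]
        refine forall₂_congr fun s t => ?_
        rw [← mul_nonneg_iff_of_pos_left hU, mul_formHess hr,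
          mul_nonneg_iff_of_pos_left (by positivity)]
    _ ↔ hessCoeff₁₂ r a v ^ 2 ≤ hessCoeff₁₁ r a v * hessCoeff₂₂ r a v :=
        quadratic_form_nonneg_iff (hessCoeff₁₁_pos hp ha hv)
    _ ↔ 0 ≤ reducedHessDet r a (v.1 ^ 2) (v.2 ^ 2) := by
        rw [← sub_nonneg, hessCoeff_det, mul_nonneg_iff_of_pos_left (by positivity)]

end PowMulForm

end

/-- For `r ≥ 1` and `a > 0`, the binary form `(x² + y²)^r (x² + a y²)` is convex on `ℝ²`
iff `a + 1/a ≤ 8r + 18 + 8/r`. -/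
theorem convexOn_pow_mul_iff (r : ℕ) (hr : 1 ≤ r) (a : ℝ) (ha : 0 < a) :
    ConvexOn ℝ Set.univ
        (fun v : ℝ × ℝ => (v.1 ^ 2 + v.2 ^ 2) ^ r * (v.1 ^ 2 + a * v.2 ^ 2)) ↔
      a + 1 / a ≤ 8 * r + 18 + 8 / (r : ℝ) := by
  have hr' : (0 : ℝ) < r := by exact_mod_cast hr
  have hform : (fun v : ℝ × ℝ => (v.1 ^ 2 + v.2 ^ 2) ^ r * (v.1 ^ 2 + a * v.2 ^ 2))
      = PowMulForm.form r a := by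
    ext v
    simp only [PowMulForm.form, PowMulForm.diagForm]
    ring
  rw [hform, PowMulForm.convexOn_form_iff_forall_formHess_nonneg]
  calc (∀ v d, 0 ≤ PowMulForm.formHess r a v d)
      ↔ ∀ v : ℝ × ℝ, 0 ≤ PowMulForm.reducedHessDet r a (v.1 ^ 2) (v.2 ^ 2) :=
        forall_congr' (PowMulForm.forall_formHess_nonneg_iff hr ha.le)
    _ ↔ (a ^ 2 + 1) * r ≤ (8 * r ^ 2 + 18 * r + 8) * a :=
        Prod.forall.trans (PowMulForm.forall_reducedHessDet_nonneg_iff hr' ha.le)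
    _ ↔ a + 1 / a ≤ 8 * r + 18 + 8 / (r : ℝ) := by
        rw [show a + 1 / a = (a ^ 2 + 1) / a by field_simp,
          show 8 * r + 18 + 8 / (r : ℝ) = (8 * r ^ 2 + 18 * r + 8) / r by field_simp,
          div_le_div_iff₀ ha hr']
end

section
/- Let r, s ∈ [−1/3, 0] and set U(r) = −(1+3r)/(3−3r). If s ≥ U(r), then [f_r∘M₁, f_s∘M₂] ≥ 0 for all 2×2 real matrices M₁, M₂. If s < U(r), then there exist 2×2 real matrices M₁, M₂ with [f_r∘M₁, f_s∘M₂] < 0. -/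
/-!
The pairing depends on `M₁, M₂` only through `N = M₁ M₂ᵀ`, and in the entries `a, b, c, d` of `N`
four times the pairing is
`k₁ (a²+b²+c²+d²)² + k₂ (a²-b²+c²-d²)² + k₃ (a²+b²-c²-d²)² + k₄ (a²-b²-c²+d²)² + 48 r s (ad+bc)²`
with `k₁ = 1 + 3r + 3s - 3rs`. On `[-1/3, 0]²` the weights `k₂, k₃, k₄` and `rs` are nonnegative,
and `k₁ ≥ 0` is exactly `s ≥ U(r)`. When `k₁ < 0`, the matrix `N = !![1, 1; -1, 1]` kills every
square but the first, so the pairing is `4 k₁ < 0`.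
-/

open MvPolynomial Filter

/-- The binary quartic `f_λ(x,y) = x⁴ + 6λ x²y² + y⁴`. -/
noncomputable def fQuartic (l : ℝ) : MvPolynomial (Fin 2) ℝ :=
  X 0 ^ 4 + MvPolynomial.C (6 * l) * X 0 ^ 2 * X 1 ^ 2 + X 1 ^ 4

noncomputable def binaryMonomial (i j : ℕ) : Fin 2 →₀ ℕ :=
  Finsupp.single 0 i + Finsupp.single 1 j

/-- `∑ₖ p k x^(d-k) y^k`: here `p k` is the full coefficient, `c(i) a(·;i)` in the notation
of `formInner`. -/
noncomputable def binaryForm (d : ℕ) (p : Fin (d + 1) → ℝ) : MvPolynomial (Fin 2) ℝ :=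
  ∑ k : Fin (d + 1), monomial (binaryMonomial (d - k) k) (p k)

@[simp]
lemma binaryMonomial_apply_zero (i j : ℕ) : binaryMonomial i j 0 = i := by
  simp [binaryMonomial]

@[simp]
lemma binaryMonomial_apply_one (i j : ℕ) : binaryMonomial i j 1 = j := by
  simp [binaryMonomial]

lemma monomial_binaryMonomial (i j : ℕ) (a : ℝ) :
    monomial (binaryMonomial i j) a = C a * X 0 ^ i * X 1 ^ j := by
  rw [binaryMonomial, X_pow_eq_monomial, X_pow_eq_monomial, C_apply, monomial_mul, monomial_mul,
    mul_one, mul_one, zero_add]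

lemma multinomial_binaryMonomial (i j : ℕ) :
    Nat.multinomial Finset.univ (fun t => binaryMonomial i j t) = (i + j).choose i := by
  rw [Nat.multinomial, Fin.sum_univ_two, Fin.prod_univ_two, binaryMonomial_apply_zero,
    binaryMonomial_apply_one, Nat.choose_eq_factorial_div_factorial (Nat.le_add_right i j),
    Nat.add_sub_cancel_left]

lemma binaryMonomial_sub_injective (d : ℕ) :
    Function.Injective fun k : Fin (d + 1) => binaryMonomial (d - k) k := fun k l h =>
  Fin.ext (by simpa using congrArg (· 1) h)

lemma coeff_binaryForm (d : ℕ) (p : Fin (d + 1) → ℝ) (k : Fin (d + 1)) :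
    (binaryForm d p).coeff (binaryMonomial (d - k) k) = p k := by
  classical
  rw [binaryForm, coeff_sum, Finset.sum_eq_single k]
  · exact (coeff_monomial _ _ _).trans (if_pos rfl)
  · intro l _ hlk
    exact (coeff_monomial _ _ _).trans (if_neg ((binaryMonomial_sub_injective d).ne hlk))
  · simp

lemma support_binaryForm_subset (d : ℕ) (p : Fin (d + 1) → ℝ) :
    (binaryForm d p).support ⊆
      Finset.univ.image fun k : Fin (d + 1) => binaryMonomial (d - k) k := by
  classical
  refine support_sum.trans (Finset.biUnion_subset.mpr fun k _ => ?_)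
  exact (support_monomial_subset).trans (by simp)

lemma formInner_binaryForm (d : ℕ) (p q : Fin (d + 1) → ℝ) :
    formInner (binaryForm d p) (binaryForm d q) = ∑ k, p k * q k / d.choose k := by
  rw [formInner, Finset.sum_subset
      (Finset.union_subset (support_binaryForm_subset d p) (support_binaryForm_subset d q)),
    Finset.sum_image fun k _ l _ h => binaryMonomial_sub_injective d h]
  · refine Finset.sum_congr rfl fun k _ => ?_
    rw [coeff_binaryForm, coeff_binaryForm, multinomial_binaryMonomial,
      Nat.sub_add_cancel (Nat.lt_succ_iff.mp k.isLt), Nat.choose_symm (Nat.lt_succ_iff.mp k.isLt)]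
  · intro m _ hm
    obtain ⟨hp, hq⟩ := Finset.notMem_union.mp hm
    rw [notMem_support_iff.mp hp, zero_mul, zero_div]

lemma binaryForm_four (p : Fin 5 → ℝ) :
    binaryForm 4 p = C (p 0) * X 0 ^ 4 + C (p 1) * X 0 ^ 3 * X 1 + C (p 2) * X 0 ^ 2 * X 1 ^ 2
      + C (p 3) * X 0 * X 1 ^ 3 + C (p 4) * X 1 ^ 4 := by
  simp [binaryForm, Fin.sum_univ_five, monomial_binaryMonomial]

lemma compMat_fQuartic (l : ℝ) (M : Matrix (Fin 2) (Fin 2) ℝ) :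
    compMat (fQuartic l) M = binaryForm 4
      ![M 0 0 ^ 4 + 6 * l * M 0 0 ^ 2 * M 1 0 ^ 2 + M 1 0 ^ 4,
        4 * M 0 0 ^ 3 * M 0 1 + 12 * l * M 0 0 * M 1 0 * (M 0 0 * M 1 1 + M 0 1 * M 1 0)
          + 4 * M 1 0 ^ 3 * M 1 1,
        6 * M 0 0 ^ 2 * M 0 1 ^ 2
          + 6 * l * (M 0 0 ^ 2 * M 1 1 ^ 2 + 4 * M 0 0 * M 0 1 * M 1 0 * M 1 1
            + M 0 1 ^ 2 * M 1 0 ^ 2)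
          + 6 * M 1 0 ^ 2 * M 1 1 ^ 2,
        4 * M 0 0 * M 0 1 ^ 3 + 12 * l * M 0 1 * M 1 1 * (M 0 0 * M 1 1 + M 0 1 * M 1 0)
          + 4 * M 1 0 * M 1 1 ^ 3,
        M 0 1 ^ 4 + 6 * l * M 0 1 ^ 2 * M 1 1 ^ 2 + M 1 1 ^ 4] := by
  simp only [binaryForm_four, compMat, fQuartic, map_add, map_mul, map_pow, aeval_X, aeval_C,
    algebraMap_eq, Fin.sum_univ_two, map_ofNat, Matrix.cons_val]
  ring

/-- `[f_r ∘ N, f_s]` in terms of the entries `N = !![a, b; c, d]`. -/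
def fQuarticPairing (r s a b c d : ℝ) : ℝ :=
  a ^ 4 + b ^ 4 + c ^ 4 + d ^ 4 + 6 * r * (a ^ 2 * c ^ 2 + b ^ 2 * d ^ 2)
    + 6 * s * (a ^ 2 * b ^ 2 + c ^ 2 * d ^ 2)
    + 6 * r * s * (a ^ 2 * d ^ 2 + b ^ 2 * c ^ 2 + 4 * a * b * c * d)

lemma formInner_compMat_fQuartic (r s : ℝ) (M₁ M₂ : Matrix (Fin 2) (Fin 2) ℝ) :
    formInner (compMat (fQuartic r) M₁) (compMat (fQuartic s) M₂) =
      fQuarticPairing r s ((M₁ * M₂.transpose) 0 0) ((M₁ * M₂.transpose) 0 1)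
        ((M₁ * M₂.transpose) 1 0) ((M₁ * M₂.transpose) 1 1) := by
  rw [compMat_fQuartic, compMat_fQuartic, formInner_binaryForm]
  simp only [Nat.reduceAdd, Fin.sum_univ_five, Matrix.cons_val_zero, Nat.choose, Nat.cast_one,
    div_one, Matrix.cons_val_one, add_zero, Nat.cast_ofNat, Matrix.cons_val, fQuarticPairing,
    Matrix.mul_apply, Matrix.transpose_apply, Fin.sum_univ_two]
  ring

lemma four_mul_fQuarticPairing (r s a b c d : ℝ) :
    4 * fQuarticPairing r s a b c d =
      (1 + 3 * r + 3 * s - 3 * r * s) * (a ^ 2 + b ^ 2 + c ^ 2 + d ^ 2) ^ 2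
        + (1 + 3 * r - 3 * s + 3 * r * s) * (a ^ 2 - b ^ 2 + c ^ 2 - d ^ 2) ^ 2
        + (1 - 3 * r + 3 * s + 3 * r * s) * (a ^ 2 + b ^ 2 - c ^ 2 - d ^ 2) ^ 2
        + (1 - 3 * r - 3 * s - 3 * r * s) * (a ^ 2 - b ^ 2 - c ^ 2 + d ^ 2) ^ 2
        + 48 * r * s * (a * d + b * c) ^ 2 := by
  unfold fQuarticPairing
  ring

lemma fQuarticPairing_nonneg {r s : ℝ} (hr : r ∈ Set.Icc (-(1 / 3) : ℝ) 0)
    (hs : s ∈ Set.Icc (-(1 / 3) : ℝ) 0) (hrs : 0 ≤ 1 + 3 * r + 3 * s - 3 * r * s) (a b c d : ℝ) :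
    0 ≤ fQuarticPairing r s a b c d := by
  obtain ⟨hr₁, hr₂⟩ := hr
  obtain ⟨hs₁, hs₂⟩ := hs
  have h₂ : 0 ≤ 1 + 3 * r - 3 * s + 3 * r * s := by nlinarith
  have h₃ : 0 ≤ 1 - 3 * r + 3 * s + 3 * r * s := by nlinarith
  have h₄ : 0 ≤ 1 - 3 * r - 3 * s - 3 * r * s := by nlinarith
  have h₅ : 0 ≤ 48 * r * s := mul_nonneg_of_nonpos_of_nonpos (by linarith) hs₂
  have h : 0 ≤ 4 * fQuarticPairing r s a b c d := by
    rw [four_mul_fQuarticPairing]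
    refine add_nonneg (add_nonneg (add_nonneg (add_nonneg ?_ ?_) ?_) ?_) ?_ <;>
      exact mul_nonneg ‹_› (sq_nonneg _)
  linarith

lemma fQuarticPairing_one_one_neg_one_one (r s : ℝ) :
    fQuarticPairing r s 1 1 (-1) 1 = 4 * (1 + 3 * r + 3 * s - 3 * r * s) := by
  unfold fQuarticPairing
  ring

lemma neg_div_le_iff_nonneg {r s : ℝ} (hr : r < 1) :
    -(1 + 3 * r) / (3 - 3 * r) ≤ s ↔ 0 ≤ 1 + 3 * r + 3 * s - 3 * r * s := by
  rw [div_le_iff₀ (by linarith)]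
  constructor <;> intro h <;> linarith

/-- For `r, s ∈ [−1/3, 0]` and `U(r) = −(1+3r)/(3−3r)`: if `s ≥ U(r)` then
`[f_r∘M₁, f_s∘M₂] ≥ 0` for all matrices `M₁, M₂`; if `s < U(r)` there are matrices
making the pairing negative. -/
theorem fQuartic_orbit_pairing (r s : ℝ)
    (hrI : r ∈ Set.Icc (-(1 / 3) : ℝ) 0) (hsI : s ∈ Set.Icc (-(1 / 3) : ℝ) 0) :
    (-(1 + 3 * r) / (3 - 3 * r) ≤ s →
      ∀ M₁ M₂ : Matrix (Fin 2) (Fin 2) ℝ,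
        0 ≤ formInner (compMat (fQuartic r) M₁) (compMat (fQuartic s) M₂)) ∧
    (s < -(1 + 3 * r) / (3 - 3 * r) →
      ∃ M₁ M₂ : Matrix (Fin 2) (Fin 2) ℝ,
        formInner (compMat (fQuartic r) M₁) (compMat (fQuartic s) M₂) < 0) := by
  have hr : r < 1 := by linarith [hrI.2]
  constructor
  · intro hU M₁ M₂
    rw [formInner_compMat_fQuartic]
    exact fQuarticPairing_nonneg hrI hsI ((neg_div_le_iff_nonneg hr).mp hU) _ _ _ _
  · intro hU
    have hneg : 1 + 3 * r + 3 * s - 3 * r * s < 0 :=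
      not_le.mp ((neg_div_le_iff_nonneg hr).not.mp (not_le.mpr hU))
    refine ⟨!![1, 1; -1, 1], 1, ?_⟩
    rw [formInner_compMat_fQuartic]
    simp only [Matrix.transpose_one, mul_one, Matrix.of_apply, Matrix.cons_val',
      Matrix.cons_val_zero, Matrix.cons_val_fin_one, Matrix.cons_val_one]
    rw [fQuarticPairing_one_one_neg_one_one]
    linarith
end

section
/- K_{2,4} = Q_{2,4}: a binary quartic form p ∈ F_{2,4} is a convex function on ℝ² if and only if p is a finite sum of fourth powers of real linear forms, i.e., p(x,y) = Σ_{k=1}^s (a_k x + b_k y)⁴ for some s ∈ ℕ and a_k, b_k ∈ ℝ. -/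
/-!
Write `p = ∑ₖ (4 choose k) aₖ x^(4-k) y^k` and let `L` be the functional on quartics with
`L(x^(4-k) y^k) = aₖ`. The Hankel form `Q(g) = L(g²)` on binary quadratics `g` satisfies
`Q(g) = g(c, d)²` when `p = (c x + d y)⁴`, and the Hessian of `p` at `v` in direction `u` is
`12 Q(ℓ_v ℓ_u)`, where `ℓ_v` is the linear form with coefficient vector `v`. So convexity makes `Q`
nonnegative on products of two linear forms; every other quadratic is, up to a scalar,
`ℓ² + m²`, and `Q(ℓ² + m²) = Q(ℓ²) + Q(m²) + 2 Q(ℓ m)`, so `Q` is positive semidefinite.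

A positive semidefinite Hankel form comes from a measure with at most three atoms on the
projective line: `a₀, …, a₃` satisfy a recurrence `aₖ₊₂ = σ aₖ₊₁ - π aₖ` whose characteristic
polynomial has distinct real roots `z₁, z₂`, hence
`p = w₁ (x + z₁ y)⁴ + w₂ (x + z₂ y)⁴ + ρ y⁴`, and evaluating `Q` at the quadratics vanishing at two
of the three points `(1, z₁), (1, z₂), (0, 1)` shows `w₁, w₂, ρ ≥ 0`.
-/

open MvPolynomial Set Filter Topology

def binaryQuartic (a : Fin 5 → ℝ) (x y : ℝ) : ℝ :=
  a 0 * x ^ 4 + 4 * a 1 * x ^ 3 * y + 6 * a 2 * x ^ 2 * y ^ 2 + 4 * a 3 * x * y ^ 3 + a 4 * y ^ 4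

-- `L(g²)` at `g = r x² + s x y + t y²`, i.e. the quadratic form of the Hankel matrix `(a (i + j))`.
def hankelForm (a : Fin 5 → ℝ) (r s t : ℝ) : ℝ :=
  a 0 * r ^ 2 + 2 * a 1 * r * s + a 2 * (s ^ 2 + 2 * r * t) + 2 * a 3 * s * t + a 4 * t ^ 2

def coeffFourthPower (c d : ℝ) : Fin 5 → ℝ := ![c ^ 4, c ^ 3 * d, c ^ 2 * d ^ 2, c * d ^ 3, d ^ 4]

def IsFourthPowerSum (a : Fin 5 → ℝ) : Prop :=
  ∃ (s : ℕ) (c d : Fin s → ℝ), a = ∑ i, coeffFourthPower (c i) (d i)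

lemma MvPolynomial.IsHomogeneous.eval_eq_sum_range {R : Type*} [CommSemiring R]
    {p : MvPolynomial (Fin 2) R} {n : ℕ} (hp : p.IsHomogeneous n) (x : Fin 2 → R) :
    eval x p = ∑ i ∈ Finset.range (n + 1),
      coeff (Finsupp.single 0 (n - i) + Finsupp.single 1 i) p * x 0 ^ (n - i) * x 1 ^ i := by
  set m : ℕ → Fin 2 →₀ ℕ := fun i => Finsupp.single 0 (n - i) + Finsupp.single 1 i
  have hm : Set.InjOn m (Finset.range (n + 1)) := fun i _ j _ hij => by
    simpa [m] using congr($hij 1)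
  have hsupp : p.support ⊆ (Finset.range (n + 1)).image m := by
    intro d hd
    have hdeg : d 0 + d 1 = n := by
      rw [← Fin.sum_univ_two, ← Finsupp.degree_eq_sum, Finsupp.degree_eq_weight_one]
      exact hp (mem_support_iff.1 hd)
    refine Finset.mem_image.2 ⟨d 1, Finset.mem_range.2 (by omega), ?_⟩
    ext k
    fin_cases k <;> simp [m]
    omega
  rw [eval_eq', Finset.sum_subset hsupp fun d _ hd => by simp [notMem_support_iff.1 hd],
    Finset.sum_image hm]
  simp [m, Fin.prod_univ_two, mul_assoc]

lemma exists_binaryQuartic_eq {p : MvPolynomial (Fin 2) ℝ} (hp : p.IsHomogeneous 4) :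
    ∃ a, ∀ x, eval x p = binaryQuartic a (x 0) (x 1) := by
  refine ⟨![coeff (Finsupp.single 0 4 + Finsupp.single 1 0) p,
    coeff (Finsupp.single 0 3 + Finsupp.single 1 1) p / 4,
    coeff (Finsupp.single 0 2 + Finsupp.single 1 2) p / 6,
    coeff (Finsupp.single 0 1 + Finsupp.single 1 3) p / 4,
    coeff (Finsupp.single 0 0 + Finsupp.single 1 4) p], fun x => ?_⟩
  rw [hp.eval_eq_sum_range]
  simp [Finset.sum_range_succ, binaryQuartic, -Finsupp.single_tsub]
  ring

lemma binaryQuartic_coeffFourthPower (c d x y : ℝ) :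
    binaryQuartic (coeffFourthPower c d) x y = (c * x + d * y) ^ 4 := by
  simp [binaryQuartic, coeffFourthPower]
  ring

lemma binaryQuartic_sum {ι : Type*} (t : Finset ι) (f : ι → Fin 5 → ℝ) (x y : ℝ) :
    binaryQuartic (∑ i ∈ t, f i) x y = ∑ i ∈ t, binaryQuartic (f i) x y := by
  simp only [binaryQuartic, Finset.sum_apply, Finset.mul_sum, Finset.sum_mul,
    ← Finset.sum_add_distrib]

lemma hankelForm_add (a b : Fin 5 → ℝ) (r s t : ℝ) :
    hankelForm (a + b) r s t = hankelForm a r s t + hankelForm b r s t := by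
  simp only [hankelForm, Pi.add_apply]
  ring

lemma hankelForm_smul (w : ℝ) (a : Fin 5 → ℝ) (r s t : ℝ) :
    hankelForm (w • a) r s t = w * hankelForm a r s t := by
  simp only [hankelForm, Pi.smul_apply, smul_eq_mul]
  ring

lemma hankelForm_mul_mul_mul (a : Fin 5 → ℝ) (k r s t : ℝ) :
    hankelForm a (k * r) (k * s) (k * t) = k ^ 2 * hankelForm a r s t := by
  unfold hankelForm
  ring

lemma hankelForm_coeffFourthPower (c d r s t : ℝ) :
    hankelForm (coeffFourthPower c d) r s t = (r * c ^ 2 + s * c * d + t * d ^ 2) ^ 2 := by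
  simp [hankelForm, coeffFourthPower]
  ring

lemma coeffFourthPower_mul_mul (k c d : ℝ) :
    coeffFourthPower (k * c) (k * d) = k ^ 4 • coeffFourthPower c d := by
  ext i
  fin_cases i <;> simp [coeffFourthPower] <;> ring

lemma IsFourthPowerSum.add {a b : Fin 5 → ℝ} (ha : IsFourthPowerSum a)
    (hb : IsFourthPowerSum b) : IsFourthPowerSum (a + b) := by
  obtain ⟨m, c, d, rfl⟩ := ha
  obtain ⟨n, c', d', rfl⟩ := hb
  exact ⟨m + n, Fin.append c c', Fin.append d d', by simp [Fin.sum_univ_add]⟩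

lemma isFourthPowerSum_smul_coeffFourthPower {w : ℝ} (hw : 0 ≤ w) (c d : ℝ) :
    IsFourthPowerSum (w • coeffFourthPower c d) := by
  refine ⟨1, fun _ => √√w * c, fun _ => √√w * d, ?_⟩
  rw [Fin.sum_univ_one, coeffFourthPower_mul_mul, show (4 : ℕ) = 2 * 2 from rfl, pow_mul,
    Real.sq_sqrt (Real.sqrt_nonneg w), Real.sq_sqrt hw]

lemma sq_le_mul_of_forall_nonneg {α β γ : ℝ} (h : ∀ x, 0 ≤ α * x ^ 2 + 2 * β * x + γ) :
    β ^ 2 ≤ α * γ := by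
  have := discrim_le_zero fun x => by simpa [sq] using h x
  rw [discrim] at this
  linarith

lemma nonneg_of_forall_mul_sq_add_mul_pow_four_nonneg {Φ Ψ : ℝ}
    (h : ∀ ε : ℝ, 0 ≤ Φ * ε ^ 2 + Ψ * ε ^ 4) : 0 ≤ Φ := by
  have hlim : Tendsto (fun ε : ℝ => Φ + Ψ * ε ^ 2) (𝓝[≠] 0) (𝓝 Φ) := by
    have : Continuous fun ε : ℝ => Φ + Ψ * ε ^ 2 := by fun_prop
    simpa using (this.tendsto 0).mono_left nhdsWithin_le_nhds
  refine ge_of_tendsto hlim (eventually_nhdsWithin_of_forall fun ε hε => ?_)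
  have : 0 ≤ ε ^ 2 * (Φ + Ψ * ε ^ 2) := by linear_combination h ε
  exact nonneg_of_mul_nonneg_right this (sq_pos_of_ne_zero hε)

lemma exists_ne_add_eq_and_mul_eq {σ π : ℝ} (h : 4 * π < σ ^ 2) :
    ∃ z₁ z₂ : ℝ, z₁ ≠ z₂ ∧ z₁ + z₂ = σ ∧ z₁ * z₂ = π := by
  have hδ : 0 < √(σ ^ 2 - 4 * π) := Real.sqrt_pos.2 (by linarith)
  refine ⟨(σ + √(σ ^ 2 - 4 * π)) / 2, (σ - √(σ ^ 2 - 4 * π)) / 2, by linarith, by ring, ?_⟩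
  linear_combination -Real.sq_sqrt (by linarith : 0 ≤ σ ^ 2 - 4 * π) / 4

lemma ConvexOn.two_mul_le_add_sub {E : Type*} [AddCommGroup E] [Module ℝ E] {f : E → ℝ}
    (hf : ConvexOn ℝ univ f) (v u : E) : 2 * f v ≤ f (v + u) + f (v - u) := by
  have h := hf.2 (mem_univ (v + u)) (mem_univ (v - u)) (by norm_num : (0 : ℝ) ≤ 1 / 2)
    (by norm_num : (0 : ℝ) ≤ 1 / 2) (by norm_num)
  rw [show (1 / 2 : ℝ) • (v + u) + (1 / 2 : ℝ) • (v - u) = v by module] at h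
  simp only [smul_eq_mul] at h
  linarith

lemma convexOn_sum {𝕜 E β ι : Type*} [Semiring 𝕜] [PartialOrder 𝕜] [AddCommMonoid E]
    [AddCommMonoid β] [PartialOrder β] [IsOrderedAddMonoid β] [SMul 𝕜 E] [Module 𝕜 β]
    {s : Set E} (hs : Convex 𝕜 s) (t : Finset ι) {f : ι → E → β}
    (hf : ∀ i ∈ t, ConvexOn 𝕜 s (f i)) : ConvexOn 𝕜 s fun x => ∑ i ∈ t, f i x := by
  induction t using Finset.cons_induction with
  | empty => simpa using convexOn_const 0 hs
  | cons i t hit ih =>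
    simp only [Finset.sum_cons]
    exact (hf i (t.mem_cons_self i)).add (ih fun j hj => hf j (Finset.mem_cons_of_mem hj))

lemma convexOn_add_pow_four (c d : ℝ) :
    ConvexOn ℝ univ fun x : Fin 2 → ℝ => (c * x 0 + d * x 1) ^ 4 := by
  have hpow : ConvexOn ℝ univ fun z : ℝ => z ^ 4 := Even.convexOn_pow ⟨2, rfl⟩
  exact hpow.comp_linearMap (c • LinearMap.proj 0 + d • LinearMap.proj 1 : (Fin 2 → ℝ) →ₗ[ℝ] ℝ)

lemma hankelForm_mul_nonneg_of_convexOn {a : Fin 5 → ℝ}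
    (ha : ConvexOn ℝ univ fun v : Fin 2 → ℝ => binaryQuartic a (v 0) (v 1)) (x y u w : ℝ) :
    0 ≤ hankelForm a (x * u) (x * w + y * u) (y * w) := by
  refine nonneg_of_forall_mul_sq_add_mul_pow_four_nonneg
    (Ψ := binaryQuartic a u w / 6) fun ε => ?_
  have h := ha.two_mul_le_add_sub ![x, y] ![ε * u, ε * w]
  simp only [Pi.add_apply, Pi.sub_apply, Matrix.cons_val_zero, Matrix.cons_val_one] at h
  -- the second difference of `p` at `(x, y)` in direction `ε (u, w)` is
  -- `12 ε² hankelForm (…) + 2 ε⁴ p(u, w)`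
  unfold binaryQuartic hankelForm at *
  linear_combination h / 12

lemma hankelForm_nonneg_of_mul_nonneg {a : Fin 5 → ℝ}
    (h : ∀ x y u w, 0 ≤ hankelForm a (x * u) (x * w + y * u) (y * w)) (r s t : ℝ) :
    0 ≤ hankelForm a r s t := by
  rcases eq_or_ne r 0 with rfl | hr
  · simpa using h 0 1 s t
  suffices 0 ≤ hankelForm a (r * r) (r * s) (r * t) by
    rw [hankelForm_mul_mul_mul] at this
    exact nonneg_of_mul_nonneg_right this (by positivity)
  rcases le_or_gt (4 * r * t) (s ^ 2) with hdisc | hdisc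
  · -- `r x² + s x y + t y²` has real roots, so `r` times it is a product of two linear forms
    have hδ := Real.sq_sqrt (sub_nonneg.2 hdisc)
    convert h r ((s + √(s ^ 2 - 4 * r * t)) / 2) r ((s - √(s ^ 2 - 4 * r * t)) / 2) using 2
    · ring
    · linear_combination hδ / 4
  · -- otherwise `r` times it is `ℓ² + m²` with `ℓ = r x + (s / 2) y` and `m = √(r t - s² / 4) y`
    set m := √(r * t - s ^ 2 / 4)
    have hm : m * m = r * t - s ^ 2 / 4 := Real.mul_self_sqrt (by linarith)
    rw [show r * t = s / 2 * (s / 2) + m * m by linarith]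
    have hℓℓ := h r (s / 2) r (s / 2)
    have hmm := h 0 m 0 m
    have hℓm := h r (s / 2) 0 m
    unfold hankelForm at *
    linear_combination hℓℓ + hmm + 2 * hℓm

lemma exists_recurrence_of_hankelForm_nonneg {a : Fin 5 → ℝ}
    (ha : ∀ r s t, 0 ≤ hankelForm a r s t) :
    ∃ σ π : ℝ, 4 * π < σ ^ 2 ∧ a 2 = σ * a 1 - π * a 0 ∧ a 3 = σ * a 2 - π * a 1 := by
  unfold hankelForm at ha
  have h₀ : 0 ≤ a 0 := by simpa using ha 1 0 0
  have h₀₁ : a 1 ^ 2 ≤ a 0 * a 2 :=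
    sq_le_mul_of_forall_nonneg fun x => by linear_combination ha x 1 0
  have h₀₂ : a 2 ^ 2 ≤ a 0 * a 4 :=
    sq_le_mul_of_forall_nonneg fun x => by linear_combination ha x 0 1
  have h₁₂ : a 3 ^ 2 ≤ a 4 * a 2 :=
    sq_le_mul_of_forall_nonneg fun x => by linear_combination ha 0 1 x
  rcases h₀.eq_or_lt with h₀ | h₀
  · rw [← h₀, zero_mul] at h₀₁ h₀₂
    have h₁ : a 1 = 0 := by nlinarith
    have h₂ : a 2 = 0 := by nlinarith
    rw [h₂, mul_zero] at h₁₂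
    have h₃ : a 3 = 0 := by nlinarith
    exact ⟨1, 0, by norm_num, by simp [h₁, h₂], by simp [h₂, h₃]⟩
  rcases (sub_nonneg.2 h₀₁).eq_or_lt with hD | hD
  · -- the form vanishes at `(a 1, -a 0, 0)`, which therefore lies in its kernel
    have hker : (a 1 * a 2 - a 0 * a 3) ^ 2 ≤ a 0 * (a 0 * a 2 - a 1 ^ 2) * a 4 :=
      sq_le_mul_of_forall_nonneg fun x => by linear_combination ha (x * a 1) (-x * a 0) 1
    rw [← hD, mul_zero, zero_mul] at hker
    obtain ⟨μ, hμ⟩ : ∃ μ, a 1 = μ * a 0 := ⟨a 1 / a 0, by field_simp⟩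
    have h₂ : a 2 = μ ^ 2 * a 0 :=
      mul_left_cancel₀ h₀.ne' (by linear_combination -hD + (a 1 + μ * a 0) * hμ)
    have h₃ : a 3 = μ * a 2 := mul_left_cancel₀ h₀.ne' <| by
      linear_combination -(pow_eq_zero_iff two_ne_zero).1 (le_antisymm hker (sq_nonneg _)) +
        a 2 * hμ
    refine ⟨2 * μ + 1, μ ^ 2 + μ, by nlinarith, ?_, ?_⟩
    · linear_combination h₂ - (2 * μ + 1) * hμ
    · linear_combination h₃ + (μ + 1) * (μ * hμ - h₂)
  · set D := a 0 * a 2 - a 1 ^ 2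
    set E := a 0 * a 3 - a 1 * a 2
    set F := a 1 * a 3 - a 2 ^ 2
    have hΔ : 4 * D * F < E ^ 2 := by
      have : a 0 ^ 2 * (E ^ 2 - 4 * D * F) =
          (a 0 ^ 2 * a 3 - 3 * a 0 * a 1 * a 2 + 2 * a 1 ^ 3) ^ 2 + 4 * D ^ 3 := by
        ring
      have : 0 < a 0 ^ 2 * (E ^ 2 - 4 * D * F) := by rw [this]; positivity
      linarith [pos_of_mul_pos_right this (sq_nonneg _)]
    refine ⟨E / D, F / D, ?_, ?_, ?_⟩
    · rw [div_pow, lt_div_iff₀ (by positivity)]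
      field_simp
      linarith
    · field_simp
      ring
    · field_simp
      ring

lemma isFourthPowerSum_of_recurrence {a : Fin 5 → ℝ} (ha : ∀ r s t, 0 ≤ hankelForm a r s t)
    {z₁ z₂ : ℝ} (hz : z₁ ≠ z₂) (h₂ : a 2 = (z₁ + z₂) * a 1 - z₁ * z₂ * a 0)
    (h₃ : a 3 = (z₁ + z₂) * a 2 - z₁ * z₂ * a 1) : IsFourthPowerSum a := by
  have hz' : z₁ - z₂ ≠ 0 := sub_ne_zero.2 hz
  obtain ⟨w₁, w₂, hw₀, hw₁⟩ : ∃ w₁ w₂ : ℝ, a 0 = w₁ + w₂ ∧ a 1 = w₁ * z₁ + w₂ * z₂ :=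
    ⟨(a 1 - z₂ * a 0) / (z₁ - z₂), (z₁ * a 0 - a 1) / (z₁ - z₂), by field_simp; ring,
      by field_simp; ring⟩
  obtain ⟨ρ, hw₄⟩ : ∃ ρ : ℝ, a 4 = w₁ * z₁ ^ 4 + w₂ * z₂ ^ 4 + ρ :=
    ⟨_, (add_sub_cancel _ _).symm⟩
  have hdec : a = w₁ • coeffFourthPower 1 z₁ + w₂ • coeffFourthPower 1 z₂ +
      ρ • coeffFourthPower 0 1 := by
    ext i
    fin_cases i <;> simp [coeffFourthPower]
    · exact hw₀
    · exact hw₁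
    · rw [h₂, hw₀, hw₁]; ring
    · rw [h₃, h₂, hw₀, hw₁]; ring
    · exact hw₄
  have hQ : ∀ r s t, hankelForm a r s t =
      w₁ * (r + s * z₁ + t * z₁ ^ 2) ^ 2 + w₂ * (r + s * z₂ + t * z₂ ^ 2) ^ 2 + ρ * t ^ 2 := by
    intro r s t
    simp [hdec, hankelForm_add, hankelForm_smul, hankelForm_coeffFourthPower]
  have hw₁ : 0 ≤ w₁ := by
    have := ha (-z₂) 1 0
    rw [hQ] at this
    exact nonneg_of_mul_nonneg_left (by linear_combination this) (sq_pos_of_ne_zero hz')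
  have hw₂ : 0 ≤ w₂ := by
    have := ha (-z₁) 1 0
    rw [hQ] at this
    exact nonneg_of_mul_nonneg_left (by linear_combination this) (sq_pos_of_ne_zero hz')
  have hρ : 0 ≤ ρ := by
    have := ha (z₁ * z₂) (-(z₁ + z₂)) 1
    rw [hQ] at this
    linear_combination this
  rw [hdec]
  exact ((isFourthPowerSum_smul_coeffFourthPower hw₁ 1 z₁).add
    (isFourthPowerSum_smul_coeffFourthPower hw₂ 1 z₂)).add
    (isFourthPowerSum_smul_coeffFourthPower hρ 0 1)

lemma isFourthPowerSum_of_hankelForm_nonneg {a : Fin 5 → ℝ}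
    (ha : ∀ r s t, 0 ≤ hankelForm a r s t) : IsFourthPowerSum a := by
  obtain ⟨σ, π, hσπ, h₂, h₃⟩ := exists_recurrence_of_hankelForm_nonneg ha
  obtain ⟨z₁, z₂, hz, rfl, rfl⟩ := exists_ne_add_eq_and_mul_eq hσπ
  exact isFourthPowerSum_of_recurrence ha hz h₂ h₃

/-- `K_{2,4} = Q_{2,4}`: a binary quartic form is convex on `ℝ²` iff it is a finite sum
of fourth powers of real linear forms. -/
theorem convex_quartic_iff_sum_fourth_powers (p : MvPolynomial (Fin 2) ℝ)
    (hp : p.IsHomogeneous 4) :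
    ConvexOn ℝ Set.univ (fun x : Fin 2 → ℝ => eval x p) ↔
      ∃ (s : ℕ) (a b : Fin s → ℝ),
        p = ∑ k, (MvPolynomial.C (a k) * X 0 + MvPolynomial.C (b k) * X 1) ^ 4 := by
  constructor
  · intro hconv
    obtain ⟨a, hpa⟩ := exists_binaryQuartic_eq hp
    simp only [hpa] at hconv
    obtain ⟨s, c, d, rfl⟩ := isFourthPowerSum_of_hankelForm_nonneg
      (hankelForm_nonneg_of_mul_nonneg (hankelForm_mul_nonneg_of_convexOn hconv))
    refine ⟨s, c, d, MvPolynomial.funext fun x => ?_⟩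
    simp [hpa, binaryQuartic_sum, binaryQuartic_coeffFourthPower]
  · rintro ⟨s, c, d, rfl⟩
    simpa using convexOn_sum convex_univ Finset.univ fun k _ => convexOn_add_pow_four (c k) (d k)
end
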